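/- arXiv:1705.09577 — 5 statements merged into one kernel-verified Lean document; each statement's English description precedes it below -/
import Mathlib

section
/- Let D be a finite digraph without loop-edges and let a, b be distinct vertices of D. Then the elementary collapsing e_{ab} belongs to the flow semigroup S_D if and only if either a→b is an edge of D, or b→a is an edge of D that lies on a directed cycle of D. In particular, if D is strongly connected, then S_D equals the flow semigroup S_{Γ_D} of the simple graph Γ_D obtained from D by forgetting the direction of the edges. -/
/-!
Necessity: write an element of the flow semigroup as `e_{uv} * g` with `g` again in it
(`g` acts first). If its range misses exactly one point `w`, then `w = u` and the range of `g`
misses exactly `u` or `v`; peeling off factors, the missing point flows along edges to the source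
of the first collapse applied, and that collapse merges two points the whole product merges. For
`e_{ab}` the missing point is `a` and the only merged pair is `{a, b}`: the first collapse is
`e_{ab}` or `e_{ba}`, and in the second case `a` reaches `b`.

Sufficiency: for a simple path `a = p 0 → ⋯ → p k = b` and an edge `b → a`, the product
`f = e_{p 0, p 1} ⋯ e_{p (k-1), p k} * e_{b a}` sends `a` into the `k`-cycle
`p 1 → ⋯ → p k → p 1` and permutes it, so `f ^ k = e_{ab}`.
-/

variable {V : Type*}

/-- The elementary collapsing `e_{uv}`: sends `u` to `v` and fixes every other vertex. -/
def collapse [DecidableEq V] (u v : V) : Function.End V :=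
  fun x => if x = u then v else x

/-- The flow semigroup of a digraph with edge relation `E`. -/
def flowSemigroup [DecidableEq V] (E : V → V → Prop) : Subsemigroup (Function.End V) :=
  Subsemigroup.closure {f | ∃ u v, E u v ∧ f = collapse u v}

/-- The directed edge `b → a` lies on a directed cycle of the digraph `E`:
there is a directed cycle `b → a → … → b` with no repeated vertices. -/
def EdgeInDirectedCycle (E : V → V → Prop) (b a : V) : Prop :=
  ∃ l : List V, List.Chain E b (a :: (l ++ [b])) ∧ (b :: a :: l).Nodup

open Relation

theorem Subsemigroup.closure_induction_left {M : Type*} [Semigroup M] {s : Set M}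
    {p : M → Prop} (mem : ∀ x ∈ s, p x)
    (mul : ∀ x ∈ s, ∀ y ∈ Subsemigroup.closure s, p y → p (x * y))
    {x : M} (hx : x ∈ Subsemigroup.closure s) : p x := by
  suffices p x ∧ ∀ y ∈ Subsemigroup.closure s, p y → p (x * y) from this.1
  induction hx using Subsemigroup.closure_induction with
  | mem x hx => exact ⟨mem x hx, mul x hx⟩
  | mul x y _ hy ihx ihy =>
    refine ⟨ihx.2 y hy ihy.1, fun z hz hpz => ?_⟩
    rw [mul_assoc]
    exact ihx.2 _ (Subsemigroup.mul_mem _ hy hz) (ihy.2 z hz hpz)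

theorem Subsemigroup.pow_succ_mem {M : Type*} [Monoid M] (S : Subsemigroup M) {x : M}
    (hx : x ∈ S) (n : ℕ) : x ^ (n + 1) ∈ S := by
  induction n with
  | zero => simpa using hx
  | succ n ih => rw [pow_succ]; exact S.mul_mem ih hx

section Collapse

variable [DecidableEq V] {u v : V}

@[simp] theorem collapse_self (u v : V) : collapse u v u = v := if_pos rfl

theorem collapse_of_ne {x : V} (h : x ≠ u) : collapse u v x = x := if_neg h

theorem collapse_apply_ne (huv : u ≠ v) (x : V) : collapse u v x ≠ u := by
  unfold collapse
  split_ifs with hx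
  exacts [huv.symm, hx]

theorem range_collapse (huv : u ≠ v) : Set.range (collapse u v) = {u}ᶜ :=
  Set.ext fun y => ⟨by rintro ⟨x, rfl⟩; exact collapse_apply_ne huv x,
    fun hy => ⟨y, collapse_of_ne hy⟩⟩

theorem collapse_apply_eq_iff {x y : V} (huv : u ≠ v) (hxy : x ≠ y) :
    collapse u v x = collapse u v y ↔ (x = u ∧ y = v) ∨ (x = v ∧ y = u) := by
  unfold collapse
  split_ifs <;> grind

theorem image_collapse_eq_compl {S : Set V} (huv : u ≠ v) (hS : S ≠ Set.univ)
    (h : collapse u v '' S = {u}ᶜ) : S = {u}ᶜ ∨ S = {v}ᶜ := by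
  have preimage : ∀ y, y ≠ u → ∃ x ∈ S, collapse u v x = y := fun y hy =>
    (h.symm ▸ hy : y ∈ collapse u v '' S)
  have other_mem : ∀ y, y ≠ u → y ≠ v → y ∈ S := fun y hyu hyv => by
    obtain ⟨x, hx, hxy⟩ := preimage y hyu
    by_cases hxu : x = u
    · rw [hxu, collapse_self] at hxy
      exact absurd hxy.symm hyv
    · rwa [← hxy, collapse_of_ne hxu]
  have uv_mem : u ∈ S ∨ v ∈ S := by
    obtain ⟨x, hx, hxv⟩ := preimage v huv.symm
    by_cases hxu : x = u
    · exact .inl (hxu ▸ hx)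
    · rw [collapse_of_ne hxu] at hxv
      exact .inr (hxv ▸ hx)
  obtain ⟨z, hz⟩ := (Set.ne_univ_iff_exists_notMem S).1 hS
  have hz' : z = u ∨ z = v := by
    by_contra! hne
    exact hz (other_mem z hne.1 hne.2)
  rcases hz' with rfl | rfl
  · refine .inl (Set.ext fun y => ⟨fun hy hyz => hz (hyz ▸ hy), fun hyz => ?_⟩)
    by_cases hyv : y = v
    · exact hyv ▸ uv_mem.resolve_left hz
    · exact other_mem y hyz hyv
  · refine .inr (Set.ext fun y => ⟨fun hy hyz => hz (hyz ▸ hy), fun hyz => ?_⟩)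
    by_cases hyu : y = u
    · exact hyu ▸ uv_mem.resolve_right hz
    · exact other_mem y hyu hyz

end Collapse

theorem ne_of_loopless {E : V → V → Prop} (hloop : ∀ v, ¬ E v v) {u v : V} (h : E u v) :
    u ≠ v := by
  rintro rfl
  exact hloop u h

section Necessity

variable [DecidableEq V] {E : V → V → Prop}

theorem exists_notMem_range_of_mem_flowSemigroup (hloop : ∀ v, ¬ E v v) {f : Function.End V}
    (hf : f ∈ flowSemigroup E) : ∃ w, w ∉ Set.range f := by
  induction hf using Subsemigroup.closure_induction with
  | mem f hf =>
    obtain ⟨u, v, huv, rfl⟩ := hf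
    exact ⟨u, by rintro ⟨x, hx⟩; exact collapse_apply_ne (ne_of_loopless hloop huv) x hx⟩
  | mul f g _ _ ihf _ =>
    obtain ⟨w, hw⟩ := ihf
    exact ⟨w, fun ⟨x, hx⟩ => hw ⟨g x, hx⟩⟩

theorem exists_merged_edge_of_range_eq_compl (hloop : ∀ v, ¬ E v v) {f : Function.End V}
    (hf : f ∈ flowSemigroup E) {w : V} (hw : Set.range f = {w}ᶜ) :
    ∃ u v, E u v ∧ f u = f v ∧ ReflTransGen E w u := by
  refine Subsemigroup.closure_induction_left
    (p := fun f : Function.End V =>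
      ∀ w, Set.range f = {w}ᶜ → ∃ u v, E u v ∧ f u = f v ∧ ReflTransGen E w u)
    ?_ ?_ hf w hw
  · rintro _ ⟨u, v, huv, rfl⟩ w hw
    have huv' := ne_of_loopless hloop huv
    rw [range_collapse huv', compl_inj_iff, Set.singleton_eq_singleton_iff] at hw
    exact ⟨u, v, huv, by simp [collapse_of_ne huv'.symm], hw ▸ .refl⟩
  · rintro _ ⟨u, v, huv, rfl⟩ g hg ih w hw
    have huv' := ne_of_loopless hloop huv
    have hwu : u = w := by
      have : {w}ᶜ ⊆ ({u}ᶜ : Set V) :=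
        hw ▸ range_collapse huv' ▸ Set.range_comp_subset_range _ _
      simpa using this
    subst hwu
    have hrange : collapse u v '' Set.range g = {u}ᶜ :=
      (Set.range_comp (collapse u v) g).symm.trans hw
    obtain ⟨z, hz⟩ := exists_notMem_range_of_mem_flowSemigroup hloop hg
    obtain ⟨w', hw', hreach⟩ : ∃ w', Set.range g = {w'}ᶜ ∧ ReflTransGen E u w' := by
      rcases image_collapse_eq_compl huv' (fun h => hz (by rw [h]; trivial)) hrange with h | h
      exacts [⟨u, h, .refl⟩, ⟨v, h, .single huv⟩]
    obtain ⟨x, y, hxy, hg, hreach'⟩ := ih w' hw'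
    exact ⟨x, y, hxy, congrArg (collapse u v) hg, hreach.trans hreach'⟩

end Necessity

theorem edge_or_reverse_of_collapse_mem [DecidableEq V] {E : V → V → Prop}
    (hloop : ∀ v, ¬ E v v) {a b : V} (hab : a ≠ b) (h : collapse a b ∈ flowSemigroup E) :
    E a b ∨ (E b a ∧ ReflTransGen E a b) := by
  obtain ⟨u, v, huv, hmerge, hreach⟩ := exists_merged_edge_of_range_eq_compl hloop h
    (range_collapse hab)
  rcases (collapse_apply_eq_iff hab (ne_of_loopless hloop huv)).1 hmerge with
    ⟨rfl, rfl⟩ | ⟨rfl, rfl⟩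
  exacts [.inl huv, .inr ⟨huv, hreach⟩]

section Paths

variable {E : V → V → Prop}

theorem exists_nodup_isChain_of_reflTransGen {a b : V} (h : ReflTransGen E a b) :
    ∃ l : List V, (a :: l).IsChain E ∧ (a :: l).Nodup ∧
      (a :: l).getLast (List.cons_ne_nil a l) = b := by
  induction h using Relation.ReflTransGen.head_induction_on with
  | refl => exact ⟨[], .singleton _, List.nodup_singleton _, rfl⟩
  | @head a c hac _ ih =>
    obtain ⟨l, hchain, hnd, hlast⟩ := ih
    by_cases ha : a ∈ c :: l
    · obtain ⟨s, t, hst⟩ := List.append_of_mem ha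
      rw [hst] at hchain hnd
      exact ⟨t, hchain.right_of_append, hnd.of_append_right, by simpa [hst] using hlast⟩
    · exact ⟨c :: l, .cons_cons hac hchain, List.nodup_cons.2 ⟨ha, hnd⟩,
        by simpa using hlast⟩

theorem edgeInDirectedCycle_of_reflTransGen {a b : V} (hba : E b a) (hab : a ≠ b)
    (h : ReflTransGen E a b) : EdgeInDirectedCycle E b a := by
  obtain ⟨m, hchain, hnd, hlast⟩ := exists_nodup_isChain_of_reflTransGen h
  obtain rfl | ⟨l, x, rfl⟩ := m.eq_nil_or_concat
  · exact absurd hlast hab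
  · rw [List.concat_eq_append] at hchain hnd hlast
    obtain rfl : x = b := by simpa using hlast
    refine ⟨l, .cons_cons hba hchain, ?_⟩
    exact (List.perm_append_singleton _ _).nodup_iff.1 hnd

end Paths

section Construction

variable [DecidableEq V] {E : V → V → Prop} {p : ℕ → V} {k : ℕ}

def shiftAlong (p : ℕ → V) (k : ℕ) : Function.End V :=
  ((List.range k).map fun i => collapse (p i) (p (i + 1))).prod

theorem shiftAlong_succ (p : ℕ → V) (k : ℕ) :
    shiftAlong p (k + 1) = shiftAlong p k * collapse (p k) (p (k + 1)) := by
  simp [shiftAlong, List.range_succ]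

theorem shiftAlong_apply_of_forall_ne {x : V} (hx : ∀ i < k, x ≠ p i) :
    shiftAlong p k x = x := by
  induction k with
  | zero => rfl
  | succ k ih =>
    rw [shiftAlong_succ]
    show shiftAlong p k (collapse (p k) (p (k + 1)) x) = x
    rw [collapse_of_ne (hx k k.lt_succ_self), ih fun i hi => hx i (by omega)]

theorem shiftAlong_apply_of_lt (hp : Set.InjOn p (Set.Iic k)) {i : ℕ} (hi : i < k) :
    shiftAlong p k (p i) = p (i + 1) := by
  induction k with
  | zero => omega
  | succ k ih =>
    rw [shiftAlong_succ]
    show shiftAlong p k (collapse (p k) (p (k + 1)) (p i)) = _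
    rcases Nat.lt_succ_iff_lt_or_eq.1 hi with hi | rfl
    · rw [collapse_of_ne (hp.ne (Set.mem_Iic.2 (by omega)) (Set.mem_Iic.2 (by omega)) hi.ne),
        ih (hp.mono (Set.Iic_subset_Iic.2 k.le_succ)) hi]
    · rw [collapse_self, shiftAlong_apply_of_forall_ne fun j hj =>
        hp.ne (Set.mem_Iic.2 (by omega)) (Set.mem_Iic.2 (by omega)) (by omega)]

theorem shiftAlong_mul_mem (hE : ∀ i < k, E (p i) (p (i + 1))) {f : Function.End V}
    (hf : f ∈ flowSemigroup E) : shiftAlong p k * f ∈ flowSemigroup E := by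
  induction k generalizing f with
  | zero => simpa [shiftAlong] using hf
  | succ k ih =>
    rw [shiftAlong_succ, mul_assoc]
    exact ih (fun i hi => hE i (by omega))
      (Subsemigroup.mul_mem _ (Subsemigroup.subset_closure ⟨_, _, hE k k.lt_succ_self, rfl⟩) hf)

/-- The orbit of `p 0` under `f` is the lasso `p 0 → p 1 → ⋯ → p k → p 1`, whose loop has
length `k`. -/
theorem pow_eq_collapse_of_lasso (f : Function.End V) (hp : Set.InjOn p (Set.Iic k))
    (hstep : ∀ i < k, f (p i) = p (i + 1)) (hlast : f (p k) = p 1)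
    (hfix : ∀ x, (∀ i ≤ k, x ≠ p i) → f x = x) :
    f ^ k = collapse (p 0) (p k) := by
  have iter : ∀ j i, i + j ≤ k → (f ^ j) (p i) = p (i + j) := by
    intro j
    induction j with
    | zero => exact fun i _ => rfl
    | succ j ih =>
      intro i hij
      show (f ^ j) (f (p i)) = _
      rw [hstep i (by omega), ih (i + 1) (by omega), Nat.add_right_comm, Nat.add_assoc]
  funext x
  by_cases hx : ∃ i ≤ k, x = p i
  · obtain ⟨i, hi, rfl⟩ := hx
    rcases Nat.eq_zero_or_pos i with rfl | hi0
    · rw [iter k 0 (by omega), collapse_self, Nat.zero_add]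
    · rw [collapse_of_ne (hp.ne (Set.mem_Iic.2 hi) (Set.mem_Iic.2 k.zero_le) hi0.ne'),
        show k = (i - 1) + ((k - i) + 1) by omega, pow_add, pow_succ']
      show (f ^ (i - 1)) (f ((f ^ (k - i)) (p i))) = p i
      rw [iter (k - i) i (by omega), Nat.add_sub_cancel' hi, hlast, iter (i - 1) 1 (by omega),
        Nat.add_sub_cancel' hi0]
  · simp only [not_exists, not_and] at hx
    rw [collapse_of_ne (hx 0 k.zero_le)]
    exact Function.iterate_fixed (hfix x hx) k

theorem collapse_mem_of_path (hk : 0 < k) (hp : Set.InjOn p (Set.Iic k))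
    (hE : ∀ i < k, E (p i) (p (i + 1))) (hback : E (p k) (p 0)) :
    collapse (p 0) (p k) ∈ flowSemigroup E := by
  set f := shiftAlong p k * collapse (p k) (p 0)
  have hf : f ∈ flowSemigroup E :=
    shiftAlong_mul_mem hE (Subsemigroup.subset_closure ⟨_, _, hback, rfl⟩)
  have hne : ∀ i < k, p i ≠ p k := fun i hi =>
    hp.ne (Set.mem_Iic.2 hi.le) (Set.mem_Iic.2 le_rfl) hi.ne
  rw [← pow_eq_collapse_of_lasso f hp ?step ?last ?fix]
  case step =>
    intro i hi
    show shiftAlong p k (collapse (p k) (p 0) (p i)) = _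
    rw [collapse_of_ne (hne i hi), shiftAlong_apply_of_lt hp hi]
  case last =>
    show shiftAlong p k (collapse (p k) (p 0) (p k)) = _
    rw [collapse_self, shiftAlong_apply_of_lt hp hk]
  case fix =>
    intro x hx
    show shiftAlong p k (collapse (p k) (p 0) x) = x
    rw [collapse_of_ne (hx k le_rfl), shiftAlong_apply_of_forall_ne fun i hi => hx i hi.le]
  obtain ⟨n, rfl⟩ : ∃ n, k = n + 1 := ⟨k - 1, by omega⟩
  exact (flowSemigroup E).pow_succ_mem hf n

theorem collapse_mem_of_edgeInDirectedCycle {a b : V} (h : EdgeInDirectedCycle E b a) :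
    collapse a b ∈ flowSemigroup E := by
  obtain ⟨l, hchain, hnd⟩ := h
  set P := a :: (l ++ [b]) with hP
  have hchain : (b :: P).IsChain E := hchain
  have hnd : P.Nodup := (List.perm_append_singleton _ _).nodup_iff.2 hnd
  have hlen : P.length = l.length + 2 := by simp [hP]
  have hget : ∀ i (hi : i < P.length), P.getD i a = P[i] := fun i hi =>
    List.getD_eq_getElem _ _ hi
  have h0 : P.getD 0 a = a := rfl
  have hlast : P.getD (l.length + 1) a = b := by simp [hP, List.getD_eq_getElem?_getD]
  have := collapse_mem_of_path (E := E) (p := fun i => P.getD i a) (k := l.length + 1)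
    (Nat.succ_pos _) ?inj ?edges ?back
  · rwa [h0, hlast] at this
  case inj =>
    intro i hi j hj hij
    simp only [Set.mem_Iic] at hi hj hij
    rw [hget i (by omega), hget j (by omega)] at hij
    exact hnd.getElem_inj_iff.1 hij
  case edges =>
    intro i hi
    show E (P.getD i a) (P.getD (i + 1) a)
    rw [hget i (by omega), hget (i + 1) (by omega)]
    exact List.IsChain.getElem (l := P) hchain.tail i (by omega)
  case back =>
    simp only [h0, hlast]
    exact (List.isChain_cons_cons.1 hchain).1

end Construction

theorem collapse_mem_flowSemigroup_iff [DecidableEq V] {E : V → V → Prop}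
    (hloop : ∀ v, ¬ E v v) {a b : V} (hab : a ≠ b) :
    collapse a b ∈ flowSemigroup E ↔ E a b ∨ (E b a ∧ EdgeInDirectedCycle E b a) := by
  refine ⟨fun h => ?_, ?_⟩
  · rcases edge_or_reverse_of_collapse_mem hloop hab h with hab' | ⟨hba, hreach⟩
    exacts [.inl hab', .inr ⟨hba, edgeInDirectedCycle_of_reflTransGen hba hab hreach⟩]
  · rintro (h | ⟨-, h⟩)
    exacts [Subsemigroup.subset_closure ⟨a, b, h, rfl⟩, collapse_mem_of_edgeInDirectedCycle h]

theorem flowSemigroup_eq_symm_of_reflTransGen [DecidableEq V] {E : V → V → Prop}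
    (hloop : ∀ v, ¬ E v v) (hconn : ∀ u v, ReflTransGen E u v) :
    flowSemigroup E = flowSemigroup (fun u v => E u v ∨ E v u) := by
  refine le_antisymm (Subsemigroup.closure_mono ?_) (Subsemigroup.closure_le.2 ?_)
  · rintro _ ⟨u, v, huv, rfl⟩
    exact ⟨u, v, .inl huv, rfl⟩
  · rintro _ ⟨u, v, huv | hvu, rfl⟩
    · exact Subsemigroup.subset_closure ⟨u, v, huv, rfl⟩
    · have huv := (ne_of_loopless hloop hvu).symm
      exact collapse_mem_of_edgeInDirectedCycle
        (edgeInDirectedCycle_of_reflTransGen hvu huv (hconn u v))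

theorem stmt0_general [DecidableEq V] (E : V → V → Prop)
    (hloopless : ∀ v : V, ¬ E v v) (a b : V) (hab : a ≠ b) :
    (collapse a b ∈ flowSemigroup E ↔ (E a b ∨ (E b a ∧ EdgeInDirectedCycle E b a)))
    ∧ ((∀ u v : V, Relation.ReflTransGen E u v) →
        flowSemigroup E = flowSemigroup (fun u v => E u v ∨ E v u)) :=
  ⟨collapse_mem_flowSemigroup_iff hloopless hab,
    flowSemigroup_eq_symm_of_reflTransGen hloopless⟩

theorem stmt0 [Fintype V] [DecidableEq V] (E : V → V → Prop)
    (hloopless : ∀ v : V, ¬ E v v) (a b : V) (hab : a ≠ b) :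
    (collapse a b ∈ flowSemigroup E ↔ (E a b ∨ (E b a ∧ EdgeInDirectedCycle E b a)))
    ∧ ((∀ u v : V, Relation.ReflTransGen E u v) →
        flowSemigroup E = flowSemigroup (fun u v => E u v ∨ E v u)) :=
  stmt0_general E hloopless a b hab
end

section
/- Let Γ be the cycle graph on n vertices and let 1 ≤ k ≤ n−1. Then for any defect set V_k of size k, the defect k group G_{k,V_k} of Γ is isomorphic to the cyclic group Z_{n−k} of order n−k. -/
variable {V : Type*}

/-- The defect group `G_{k,K}` of the digraph `E` with defect set `K`. -/
def defectGroup [DecidableEq V] (E : V → V → Prop) (K : Set V) :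
    Subgroup (Equiv.Perm {x : V // x ∉ K}) :=
  Subgroup.closure {p | ∃ s ∈ flowSemigroup E,
    (∀ x ∈ K, s x ∉ K) ∧ ∀ (x : V) (h : x ∉ K), s x = ↑(p ⟨x, h⟩)}

/-! Every collapsing along an edge of the cycle, hence every element of the flow semigroup,
preserves the weak cyclic order `btw` of `Fin n`. Transported to `Fin (n - k)` along the
order isomorphism with the complement of `K`, every generator of the defect group becomes a
permutation preserving the cyclic order, that is, a power of the rotation `finRotate`.
Conversely the rotation itself is realised: shift every vertex except one `a ∈ K` forward along
the cycle, then push every vertex of `K` forward to the first vertex outside `K`. Both maps are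
products of collapsings. -/

open Fin.NatCast

namespace Fin

variable {n : ℕ}

lemma btw_comp_iff_of_strictMono {m : ℕ} {f : Fin m → Fin n} (hf : StrictMono f)
    {a b c : Fin m} : btw (f a) (f b) (f c) ↔ btw a b c := by
  simp only [btw_iff, hf.le_iff_le]

lemma sbtw_comp_iff_of_strictMono {m : ℕ} {f : Fin m → Fin n} (hf : StrictMono f)
    {a b c : Fin m} : sbtw (f a) (f b) (f c) ↔ sbtw a b c := by
  simp only [sbtw_iff, hf.lt_iff_lt]

lemma val_add_one_eq_or (a : Fin (n + 1)) :
    (a + 1).val = a.val + 1 ∨ (a + 1).val = 0 ∧ a.val = n := by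
  rw [val_add_one]
  split_ifs with h
  · exact .inr ⟨rfl, by simp [h]⟩
  · exact .inl rfl

lemma btw_add_one_left (a c : Fin (n + 1)) : btw a (a + 1) c := by
  have := c.isLt
  rcases val_add_one_eq_or a with h | ⟨h, h'⟩ <;> simp only [btw_iff, le_def, h] <;> omega

lemma eq_or_eq_add_one_of_btw {a b : Fin (n + 1)} (h : btw a b (a + 1)) : b = a ∨ b = a + 1 := by
  have := b.isLt
  rcases val_add_one_eq_or a with h1 | ⟨h1, h2⟩ <;>
    simp only [btw_iff, le_def, Fin.ext_iff, h1] at h ⊢ <;> omega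

lemma eq_add_one_of_not_sbtw {a c : Fin (n + 1)} (h : ¬ sbtw a (a + 1) c)
    (hc : c = a → ∀ b, b = a) : c = a + 1 := by
  by_cases hca : c = a
  · exact hca.trans (hc hca _).symm
  have := c.isLt
  rcases val_add_one_eq_or a with h1 | ⟨h1, h2⟩ <;>
    simp only [sbtw_iff, lt_def, Fin.ext_iff, h1] at h hca ⊢ <;> omega

lemma val_sub_pos_lt_of_sbtw [NeZero n] {a b c : Fin n} (h : sbtw a b c) :
    0 < (b - a).val ∧ (b - a).val < (c - a).val := by
  rcases le_or_gt a b with hab | hab <;> rcases le_or_gt a c with hac | hac <;>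
    simp only [sbtw_iff, lt_def, le_def, coe_sub_iff_le.mpr, coe_sub_iff_lt.mpr, *]
      at h hab hac ⊢ <;> omega

lemma eq_sub_natCast_iff [NeZero n] {a x : Fin n} {j : ℕ} (hj : j < n) :
    x = a - (j : Fin n) ↔ (a - x).val = j := by
  rw [eq_sub_iff_add_eq, ← eq_sub_iff_add_eq', Fin.ext_iff, Fin.val_natCast,
    Nat.mod_eq_of_lt hj, eq_comm]

lemma add_one_add_natCast_val_sub_sub_one [NeZero n] {x y : Fin n} (h : 0 < (y - x).val) :
    x + 1 + (((y - x).val - 1 : ℕ) : Fin n) = y := by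
  obtain ⟨j, hj⟩ := Nat.exists_eq_add_of_lt h
  have hy := Fin.cast_val_eq_self (y - x)
  rw [hj, zero_add, Nat.cast_add_one] at hy
  rw [hj, zero_add, Nat.add_sub_cancel, add_assoc, add_comm 1, hy, add_sub_cancel]

end Fin

namespace Equiv.Perm

variable {n : ℕ} {q : Perm (Fin (n + 1))}

lemma apply_add_one_of_btw (hq : ∀ a b c, btw a b c → btw (q a) (q b) (q c)) (x : Fin (n + 1)) :
    q (x + 1) = q x + 1 := by
  have h := hq _ _ _ (Fin.btw_add_one_left x (q.symm (q x + 1)))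
  rw [apply_symm_apply] at h
  refine (Fin.eq_or_eq_add_one_of_btw h).elim (fun hx => ?_) id
  have h1 : (1 : Fin (n + 1)) = 0 := by simpa using q.injective hx
  rw [hx, h1, add_zero]

lemma mem_zpowers_finRotate_of_btw (hq : ∀ a b c, btw a b c → btw (q a) (q b) (q c)) :
    q ∈ Subgroup.zpowers (finRotate (n + 1)) := by
  have hcast : ∀ j : ℕ, q j = j + q 0 := by
    intro j
    induction j with
    | zero => simp
    | succ j ih => rw [Nat.cast_succ, apply_add_one_of_btw hq, ih, add_right_comm]
  have hq : q = finRotate (n + 1) ^ (q 0).val := by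
    ext x : 1
    rw [coe_pow, ← finCycle_eq_finRotate_iterate, finCycle_apply]
    conv_lhs => rw [← Fin.cast_val_eq_self x, hcast, Fin.cast_val_eq_self]
  exact hq ▸ Subgroup.npow_mem_zpowers _ _

end Equiv.Perm

lemma orderOf_finRotate_succ (m : ℕ) : orderOf (finRotate (m + 1)) = m + 1 := by
  rcases m with _ | m
  · rw [finRotate_one]
    exact orderOf_one
  · rw [isCycle_finRotate.orderOf, support_finRotate, Finset.card_univ, Fintype.card_fin]

lemma Subgroup.nonempty_mulEquiv_zmod_orderOf {G : Type*} [Group G] {H : Subgroup G} {g : G}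
    (h : H = Subgroup.zpowers g) : Nonempty (H ≃* Multiplicative (ZMod (orderOf g))) := by
  subst h
  rw [← Nat.card_zpowers]
  exact ⟨(zmodCyclicMulEquiv inferInstance).symm⟩

lemma collapse_add_one_apply {n : ℕ} [NeZero n] (y x : Fin n) :
    collapse y (y + 1) x = if x = y then x + 1 else x := by
  unfold collapse
  split_ifs with h <;> simp [h]

section PushOut

variable {n : ℕ} [NeZero n] {K : Set (Fin n)}

lemma exists_add_natCast_notMem (hK : ∃ c, c ∉ K) (x : Fin n) : ∃ j : ℕ, x + j ∉ K := by
  obtain ⟨c, hc⟩ := hK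
  exact ⟨(c - x).val, by rwa [Fin.cast_val_eq_self, add_sub_cancel]⟩

lemma exists_mem_add_one_notMem (hK : ∃ c, c ∉ K) (hK0 : K.Nonempty) :
    ∃ a ∈ K, a + 1 ∉ K := by
  by_contra! hclosed
  obtain ⟨a, ha⟩ := hK0
  have hall : ∀ j : ℕ, a + (j : Fin n) ∈ K := by
    intro j
    induction j with
    | zero => simpa using ha
    | succ j ih => simpa [add_assoc] using hclosed _ ih
  obtain ⟨c, hc⟩ := hK
  exact hc (by simpa using hall (c - a).val)

open Classical in
noncomputable def pushOut (K : Set (Fin n)) (hK : ∃ c, c ∉ K) : Function.End (Fin n) :=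
  fun x => x + (Nat.find (exists_add_natCast_notMem hK x) : Fin n)

variable (hK : ∃ c, c ∉ K)

lemma pushOut_spec (x : Fin n) :
    pushOut K hK x ∉ K ∧
      ∃ d : ℕ, pushOut K hK x = x + d ∧ ∀ j < d, x + (j : Fin n) ∈ K := by
  classical
  exact ⟨Nat.find_spec (exists_add_natCast_notMem hK x), _, rfl,
    fun j hj => not_not.mp (Nat.find_min (exists_add_natCast_notMem hK x) hj)⟩

lemma pushOut_eq_of_forall_mem {x : Fin n} {t : ℕ} (ht : x + (t : Fin n) ∉ K)
    (hmin : ∀ j < t, x + (j : Fin n) ∈ K) : pushOut K hK x = x + t := by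
  obtain ⟨hz, d, hd, hdmin⟩ := pushOut_spec hK x
  rw [hd] at hz ⊢
  obtain rfl : d = t :=
    le_antisymm (not_lt.mp fun h => ht (hdmin t h)) (not_lt.mp fun h => hz (hmin d h))
  rfl

lemma pushOut_eq_self {x : Fin n} (hx : x ∉ K) : pushOut K hK x = x := by
  simpa using pushOut_eq_of_forall_mem hK (t := 0) (by simpa using hx) (by simp)

lemma pushOut_eq_collapse_mul {a : Fin n} (ha : a ∈ K) (ha' : a + 1 ∉ K)
    (hK' : ∃ c, c ∉ K \ {a}) :
    pushOut K hK = collapse a (a + 1) * pushOut (K \ {a}) hK' := by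
  funext x
  change _ = collapse a (a + 1) (pushOut (K \ {a}) hK' x)
  obtain ⟨hz, d, hd, hdmin⟩ := pushOut_spec hK' x
  rw [hd] at hz ⊢
  by_cases hxd : x + (d : Fin n) = a
  · rw [collapse, if_pos hxd, ← hxd, add_assoc, ← Nat.cast_add_one]
    refine pushOut_eq_of_forall_mem hK (by rwa [Nat.cast_add_one, ← add_assoc, hxd])
      fun j hj => ?_
    rcases Nat.lt_succ_iff_lt_or_eq.mp hj with hj | rfl
    · exact (hdmin j hj).1
    · rwa [hxd]
  · rw [collapse, if_neg hxd]
    exact pushOut_eq_of_forall_mem hK (fun h => hz ⟨h, hxd⟩) fun j hj => (hdmin j hj).1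

lemma not_sbtw_pushOut_add_one {x y : Fin n} (hy : y ∉ K) :
    ¬ sbtw x y (pushOut K hK (x + 1)) := by
  intro h
  obtain ⟨-, d, hd, hdmin⟩ := pushOut_spec hK (x + 1)
  obtain ⟨hpos, hlt⟩ := Fin.val_sub_pos_lt_of_sbtw h
  have hle : (pushOut K hK (x + 1) - x).val ≤ d + 1 := by
    rw [hd, add_assoc, add_sub_cancel_left, add_comm, ← Nat.cast_add_one, Fin.val_natCast]
    exact Nat.mod_le _ _
  exact hy (Fin.add_one_add_natCast_val_sub_sub_one hpos ▸ hdmin _ (by omega))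

lemma eq_of_pushOut_add_one_eq_self {x y : Fin n} (hx : pushOut K hK (x + 1) = x) (hy : y ∉ K) :
    y = x := by
  by_contra hyx
  obtain ⟨-, d, hd, hdmin⟩ := pushOut_spec hK (x + 1)
  have hpos : 0 < (y - x).val := Nat.pos_of_ne_zero (Fin.val_ne_zero_iff.mpr (sub_ne_zero.mpr hyx))
  have hdy : d < (y - x).val := by
    by_contra! h
    exact hy (Fin.add_one_add_natCast_val_sub_sub_one hpos ▸ hdmin _ (by omega))
  rw [hd, add_assoc, add_eq_left, add_comm, ← Nat.cast_add_one, Fin.natCast_eq_zero] at hx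
  have := Nat.le_of_dvd (Nat.succ_pos d) hx
  have := (y - x).isLt
  omega

end PushOut

section CycleFlow

open SimpleGraph

variable {n : ℕ}

lemma collapse_add_one_mem_flowSemigroup (a : Fin (n + 2)) :
    collapse a (a + 1) ∈ flowSemigroup (cycleGraph (n + 2)).Adj :=
  Subsemigroup.subset_closure ⟨a, a + 1, by simp [cycleGraph_adj], rfl⟩

lemma btw_collapse_of_adj {u v : Fin (n + 2)} (huv : (cycleGraph (n + 2)).Adj u v)
    {a b c : Fin (n + 2)} (h : btw a b c) :
    btw (collapse u v a) (collapse u v b) (collapse u v c) := by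
  have := a.isLt; have := b.isLt; have := c.isLt
  rw [cycleGraph_adj, sub_eq_iff_eq_add', sub_eq_iff_eq_add'] at huv
  simp only [Fin.btw_iff, Fin.le_def, collapse, apply_ite Fin.val, Fin.ext_iff] at h ⊢
  rcases huv with rfl | rfl
  · rcases Fin.val_add_one_eq_or v with h1 | ⟨h1, h2⟩ <;> rw [h1] <;> split_ifs <;> omega
  · rcases Fin.val_add_one_eq_or u with h1 | ⟨h1, h2⟩ <;> rw [h1] <;> split_ifs <;> omega

lemma btw_of_mem_flowSemigroup {s : Function.End (Fin (n + 2))}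
    (hs : s ∈ flowSemigroup (cycleGraph (n + 2)).Adj) {a b c : Fin (n + 2)} (h : btw a b c) :
    btw (s a) (s b) (s c) := by
  induction hs using Subsemigroup.closure_induction generalizing a b c with
  | mem f hf =>
    obtain ⟨u, v, huv, rfl⟩ := hf
    exact btw_collapse_of_adj huv h
  | mul f g _ _ hf hg => exact hf (hg h)

lemma exists_flowSemigroup_shift_before (a : Fin (n + 2)) (t : ℕ) (ht : t ≤ n) :
    ∃ s ∈ flowSemigroup (cycleGraph (n + 2)).Adj, ∀ x,
      s x = if 0 < (a - x).val ∧ (a - x).val ≤ t + 1 then x + 1 else x := by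
  induction t with
  | zero =>
    refine ⟨_, collapse_add_one_mem_flowSemigroup (a - ((1 : ℕ) : Fin (n + 2))), fun x => ?_⟩
    simp only [collapse_add_one_apply, Fin.eq_sub_natCast_iff (show 1 < n + 2 by omega)]
    split_ifs <;> first | rfl | omega
  | succ t ih =>
    obtain ⟨s, hs, hsx⟩ := ih (by omega)
    -- `s` has already moved the successor of `a - (t + 2)` on, so this collapsing merges nothing.
    refine ⟨_, Subsemigroup.mul_mem _ (collapse_add_one_mem_flowSemigroup
      (a - ((t + 2 : ℕ) : Fin (n + 2)))) hs, fun x => ?_⟩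
    change collapse _ _ (s x) = _
    rw [hsx, collapse_add_one_apply]
    by_cases hx : 0 < (a - x).val ∧ (a - x).val ≤ t + 1
    · have hsub : (a - (x + 1)).val = (a - x).val - 1 := by
        rw [sub_add_eq_sub_sub, Fin.val_sub_one_of_ne_zero (Fin.val_ne_zero_iff.mp (by omega))]
      simp only [if_pos hx, Fin.eq_sub_natCast_iff (show t + 2 < n + 2 by omega), hsub]
      split_ifs <;> first | rfl | omega
    · simp only [if_neg hx, Fin.eq_sub_natCast_iff (show t + 2 < n + 2 by omega)]
      split_ifs <;> first | rfl | omega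

lemma exists_flowSemigroup_shift (a : Fin (n + 2)) :
    ∃ s ∈ flowSemigroup (cycleGraph (n + 2)).Adj, ∀ x ≠ a, s x = x + 1 := by
  obtain ⟨s, hs, hsx⟩ := exists_flowSemigroup_shift_before a n le_rfl
  refine ⟨s, hs, fun x hx => ?_⟩
  rw [hsx, if_pos ⟨Nat.pos_of_ne_zero (Fin.val_ne_zero_iff.mpr (sub_ne_zero.mpr hx.symm)),
    Nat.lt_succ_iff.mp (a - x).isLt⟩]

lemma pushOut_mem_flowSemigroup {K : Set (Fin (n + 2))} (hK : ∃ c, c ∉ K) (hK0 : K.Nonempty) :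
    pushOut K hK ∈ flowSemigroup (cycleGraph (n + 2)).Adj := by
  induction hm : K.ncard using Nat.strong_induction_on generalizing K with
  | _ m ih =>
    obtain ⟨a, ha, ha'⟩ := exists_mem_add_one_notMem hK hK0
    have hK' : ∃ c, c ∉ K \ {a} := hK.imp fun c hc h => hc h.1
    rw [pushOut_eq_collapse_mul hK ha ha' hK']
    rcases (K \ {a}).eq_empty_or_nonempty with hempty | hne
    · have : pushOut (K \ {a}) hK' = 1 := funext fun x => pushOut_eq_self hK' (by simp [hempty])
      rw [this, mul_one]
      exact collapse_add_one_mem_flowSemigroup a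
    · exact Subsemigroup.mul_mem _ (collapse_add_one_mem_flowSemigroup a)
        (ih _ (hm ▸ Set.ncard_sdiff_singleton_lt_of_mem ha) hK' hne rfl)

lemma exists_flowSemigroup_pushOut_add_one {K : Set (Fin (n + 2))} (hK : ∃ c, c ∉ K)
    (hK0 : K.Nonempty) : ∃ s ∈ flowSemigroup (cycleGraph (n + 2)).Adj,
      (∀ x, s x ∉ K) ∧ ∀ x ∉ K, s x = pushOut K hK (x + 1) := by
  obtain ⟨a, ha⟩ := hK0
  obtain ⟨t, ht, htx⟩ := exists_flowSemigroup_shift a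
  refine ⟨pushOut K hK * t, Subsemigroup.mul_mem _ (pushOut_mem_flowSemigroup hK ⟨a, ha⟩) ht,
    fun x => (pushOut_spec hK _).1, fun x hx => ?_⟩
  change pushOut K hK (t x) = _
  rw [htx x (fun h => hx (h ▸ ha))]

end CycleFlow

section DefectGroup

open SimpleGraph

variable {n m : ℕ} {K : Set (Fin (n + 2))} (e : {x // x ∉ K} ≃o Fin (m + 1))

lemma strictMono_val_comp_symm : StrictMono fun i => (e.symm i : Fin (n + 2)) :=
  (Subtype.strictMono_coe _).comp e.symm.strictMono

lemma defectGroup_le_zpowers :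
    defectGroup (cycleGraph (n + 2)).Adj K ≤
      Subgroup.zpowers (e.toEquiv.permCongrHom.symm (finRotate (m + 1))) := by
  refine (Subgroup.closure_le _).mpr ?_
  rintro p ⟨s, hs, -, hsp⟩
  have hsq : ∀ i, s (e.symm i) = e.symm (e.toEquiv.permCongrHom p i) := by
    intro i
    simp [Equiv.permCongrHom_coe, Equiv.permCongr_apply, hsp _ (e.symm i).2]
  have hq : e.toEquiv.permCongrHom p ∈ Subgroup.zpowers (finRotate (m + 1)) := by
    refine Equiv.Perm.mem_zpowers_finRotate_of_btw fun a b c h => ?_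
    rw [← Fin.btw_comp_iff_of_strictMono (strictMono_val_comp_symm e)] at h ⊢
    simpa only [hsq] using btw_of_mem_flowSemigroup hs h
  have := Subgroup.mem_map_of_mem e.toEquiv.permCongrHom.symm.toMonoidHom hq
  rwa [MonoidHom.map_zpowers, MulEquiv.coe_toMonoidHom, MulEquiv.symm_apply_apply] at this

lemma rotation_mem_defectGroup (hK0 : K.Nonempty) :
    e.toEquiv.permCongrHom.symm (finRotate (m + 1)) ∈ defectGroup (cycleGraph (n + 2)).Adj K := by
  have hK : ∃ c, c ∉ K := ⟨_, (e.symm 0).2⟩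
  obtain ⟨s, hs, hsK, hsx⟩ := exists_flowSemigroup_pushOut_add_one hK hK0
  refine Subgroup.subset_closure ⟨s, hs, fun x _ => hsK x, fun x hx => ?_⟩
  have hf := strictMono_val_comp_symm e
  set i := e ⟨x, hx⟩
  set j := e ⟨s x, hsK x⟩
  have hfi : (e.symm i : Fin (n + 2)) = x := by simp [i]
  have hfj : (e.symm j : Fin (n + 2)) = s x := by simp [j]
  have hji : j = i + 1 := by
    refine Fin.eq_add_one_of_not_sbtw (fun h => ?_) (fun h b => ?_)
    · rw [← Fin.sbtw_comp_iff_of_strictMono hf, hfi, hfj, hsx x hx] at h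
      exact not_sbtw_pushOut_add_one hK (e.symm (i + 1)).2 h
    · have hsx' : s x = x := by rw [← hfj, ← hfi, h]
      rw [hsx x hx] at hsx'
      have hb : e.symm b = ⟨x, hx⟩ :=
        Subtype.ext (eq_of_pushOut_add_one_eq_self hK hsx' (e.symm b).2)
      rw [← e.apply_symm_apply b, hb]
  rw [← hfj, hji]
  simp [Equiv.permCongrHom_symm, Equiv.permCongrHom_coe, Equiv.permCongr_apply, i]

theorem defectGroup_cycleGraph_eq_zpowers (hK0 : K.Nonempty) :
    defectGroup (cycleGraph (n + 2)).Adj K =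
      Subgroup.zpowers (e.toEquiv.permCongrHom.symm (finRotate (m + 1))) :=
  le_antisymm (defectGroup_le_zpowers e) (Subgroup.zpowers_le.mpr (rotation_mem_defectGroup e hK0))

end DefectGroup

/-- The defect `k` group of the cycle graph on `n` vertices is cyclic of order `n - k`. -/
theorem stmt3 (n k : ℕ) (hk1 : 1 ≤ k) (hkn : k ≤ n - 1)
    (K : Set (Fin n)) (hK : K.ncard = k) :
    Nonempty (defectGroup (SimpleGraph.cycleGraph n).Adj K ≃* Multiplicative (ZMod (n - k))) := by
  obtain ⟨n, rfl⟩ : ∃ n', n = n' + 2 := ⟨n - 2, by omega⟩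
  obtain ⟨m, hm⟩ : ∃ m, n + 2 - k = m + 1 := ⟨n + 1 - k, by omega⟩
  have hK0 : K.Nonempty := Set.nonempty_of_ncard_ne_zero (by omega)
  have hcard : Nat.card {x // x ∉ K} = m + 1 := by
    have hcompl := Set.ncard_compl K
    rw [Nat.card_fin] at hcompl
    rw [← hm, ← hK, ← hcompl]
    exact Nat.card_coe_set_eq Kᶜ
  have := Fintype.ofFinite {x // x ∉ K}
  let e := (monoEquivOfFin (k := m + 1) {x // x ∉ K} (by rwa [Fintype.card_eq_nat_card])).symm
  rw [hm, ← orderOf_finRotate_succ m, ← MulEquiv.orderOf_eq e.toEquiv.permCongrHom.symm]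
  exact Subgroup.nonempty_mulEquiv_zmod_orderOf (defectGroup_cycleGraph_eq_zpowers e hK0)
end

section
/- Let Γ_1 and Γ_2 be connected induced subgraphs of a finite simple graph Γ such that Γ_1 ∩ Γ_2 = {v} for a single vertex v, and such that there are no edges in Γ between Γ_1 ∖ {v} and Γ_2 ∖ {v}. Then the defect 1 group of Γ_1 ∪ Γ_2 with defect set {v} is the direct product of the defect 1 group of Γ_1 with defect set {v} and the defect 1 group of Γ_2 with defect set {v}. -/
variable {V : Type*}

/-!
Every edge of `Γ₁ ∪ Γ₂` lies in `Γ₁` or in `Γ₂`. Extending a flow of `Γᵢ` by the identity gives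
a flow of `Γ₁ ∪ Γ₂`, so both defect groups `G(Γᵢ)` embed, and together they generate a copy of
`G(Γ₁) × G(Γ₂)` inside `G(Γ₁ ∪ Γ₂)`.

Conversely, follow a flow `s` of `Γ₁ ∪ Γ₂` that permutes the vertices other than `v` collapsing
by collapsing. Each prefix misses exactly one point, the hole, and a new collapsing either does
nothing (it starts at the hole) or moves the token it starts from into the hole. Since `v` is a
cut vertex, a token of `Γᵢ ∖ {v}` stays in `Γᵢ`, and it can sit at `v` only while the hole lies
in `Γᵢ ∖ {v}`. So the collapsings of `Γᵢ` occurring in the word form a flow of `Γᵢ` that agrees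
with `s` on `Γᵢ ∖ {v}`; at the end the hole is back at `v`, and this flow gives an element of
`G(Γᵢ)`. Hence `s` acts as a pair of elements of `G(Γ₁)` and `G(Γ₂)`.
-/
open Function Set

section Flow

variable [DecidableEq V]

@[simp] lemma collapse_apply_self (u w : V) : collapse u w u = w := if_pos rfl

lemma collapse_apply_of_ne {u w x : V} (h : x ≠ u) : collapse u w x = x := if_neg h

lemma apply_collapse_of_injective {U : Type*} [DecidableEq U] {f : U → V} (hf : Injective f)
    (a b x : U) : f (collapse a b x) = collapse (f a) (f b) (f x) := by
  by_cases hx : x = a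
  · subst hx
    simp
  · rw [collapse_apply_of_ne hx, collapse_apply_of_ne (hf.ne hx)]

def flowMonoid (E : V → V → Prop) : Submonoid (Function.End V) :=
  Submonoid.closure {f | ∃ u w, E u w ∧ f = collapse u w}

lemma mem_flowMonoid_iff {E : V → V → Prop} {f : Function.End V} :
    f ∈ flowMonoid E ↔ f = 1 ∨ f ∈ flowSemigroup E := by
  rw [flowMonoid, ← SetLike.mem_coe, Submonoid.closure_eq_one_union]
  rfl

lemma collapse_mem_flowSemigroup {E : V → V → Prop} {u w : V} (h : E u w) :
    collapse u w ∈ flowSemigroup E :=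
  Subsemigroup.subset_closure ⟨u, w, h, rfl⟩

lemma not_injective_of_mem_flowSemigroup {E : V → V → Prop} (hE : ∀ u w, E u w → u ≠ w)
    {s : Function.End V} (hs : s ∈ flowSemigroup E) : ¬ Injective s := by
  induction hs using Subsemigroup.closure_induction with
  | mem f hf =>
    obtain ⟨u, w, huw, rfl⟩ := hf
    intro hinj
    apply hE u w huw (hinj _)
    rw [collapse_apply_self, collapse_apply_of_ne (hE u w huw).symm]
  | mul f g _ _ _ hg => exact fun hfg => hg (Injective.of_comp (f := f) hfg)

lemma exists_mem_defectGroup_of_injOn [Finite V] {E : V → V → Prop}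
    (hE : ∀ u w, E u w → u ≠ w) {s : Function.End V} (hs : s ∈ flowSemigroup E) {k : V}
    (hmaps : MapsTo s {k}ᶜ {k}ᶜ) (hinj : InjOn s {k}ᶜ) :
    ∃ p ∈ defectGroup E {k}, ∀ x, (p x : V) = s x := by
  have hbij : BijOn s {k}ᶜ {k}ᶜ := ((toFinite _).injOn_iff_bijOn_of_mapsTo hmaps).mp hinj
  have hsk : s k ≠ k := by
    intro hk
    have : InjOn s (insert k {k}ᶜ) :=
      (injOn_insert (by simp)).mpr ⟨hinj, fun ⟨x, hx, hxk⟩ => hmaps hx (hxk.trans hk)⟩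
    rw [insert_eq, union_compl_self] at this
    exact not_injective_of_mem_flowSemigroup hE hs (injOn_univ.mp this)
  refine ⟨hbij.equiv s, Subgroup.subset_closure ⟨s, hs, ?_, fun x hx => rfl⟩, fun x => rfl⟩
  rintro x rfl
  exact hsk

lemma image_collapse_compl_self (u w : V) : collapse u w '' {u}ᶜ = {u}ᶜ := by
  ext x
  constructor
  · rintro ⟨y, hy, rfl⟩
    rwa [collapse_apply_of_ne hy]
  · exact fun hx => ⟨x, hx, collapse_apply_of_ne hx⟩

lemma image_collapse_compl_target {u w : V} (huw : u ≠ w) : collapse u w '' {w}ᶜ = {u}ᶜ := by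
  ext x
  constructor
  · rintro ⟨y, hy, rfl⟩
    by_cases hyu : y = u
    · rw [hyu, collapse_apply_self]
      exact huw.symm
    · rwa [collapse_apply_of_ne hyu]
  · intro hx
    by_cases hxw : x = w
    · exact ⟨u, huw, by rw [collapse_apply_self, hxw]⟩
    · exact ⟨x, hxw, collapse_apply_of_ne hx⟩

lemma exists_image_collapse_mul_eq_compl {t : Function.End V} {D : Set V} {h u w : V}
    (ht : t '' D = {h}ᶜ) (huw : u ≠ w) (hinj : InjOn (collapse u w * t) D) :
    ∃ h', (collapse u w * t) '' D = {h'}ᶜ ∧ (u = h ∧ h' = h ∨ w = h ∧ h' = u) := by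
  have himage : (collapse u w * t) '' D = collapse u w '' {h}ᶜ := by
    rw [← ht]
    exact (image_image (collapse u w) t D).symm
  by_cases huh : u = h
  · subst huh
    exact ⟨u, himage.trans (image_collapse_compl_self u w), Or.inl ⟨rfl, rfl⟩⟩
  have hwh : w = h := by
    by_contra hwh
    obtain ⟨x, hx, rfl⟩ : u ∈ t '' D := ht ▸ huh
    obtain ⟨y, hy, rfl⟩ : w ∈ t '' D := ht ▸ hwh
    refine huw (congrArg t (hinj hx hy ?_))
    change collapse (t x) (t y) (t x) = collapse (t x) (t y) (t y)
    rw [collapse_apply_self, collapse_apply_of_ne huw.symm]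
  subst hwh
  exact ⟨u, himage.trans (image_collapse_compl_target huw), Or.inr ⟨rfl, rfl⟩⟩

end Flow

section SideRestriction

variable {U W : Type*} [DecidableEq U] [DecidableEq W] {H : SimpleGraph U} {G : SimpleGraph W}

def IsAttachedAt (φ : H ↪g G) (u₀ : U) : Prop :=
  ∀ a ≠ u₀, ∀ y, G.Adj (φ a) y → y ∈ range φ

/-- Here `t` is a product of collapsings that misses exactly the point `hole`. On the side `φ`
it is realised by `t₁`, and a token of that side can occupy the cut vertex `φ u₀` only while
the hole lies on that side too. -/
structure IsSideRestriction (φ : U → W) (u₀ : U) (t : Function.End W) (hole : W)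
    (t₁ : Function.End U) : Prop where
  apply_eq : ∀ a ≠ u₀, φ (t₁ a) = t (φ a)
  exists_eq_hole : ∀ a ≠ u₀, t₁ a = u₀ → ∃ b ≠ u₀, hole = φ b

variable {φ : H ↪g G} {u₀ : U} {t : Function.End W} {h h' : W} {t₁ : Function.End U}

lemma IsSideRestriction.collapse_map (hr : IsSideRestriction φ u₀ t h t₁)
    (hhole : ∀ a ≠ u₀, t (φ a) ≠ h) {a' b' : U} (hab : a' ≠ b')
    (hnew : φ a' = h ∧ h' = h ∨ φ b' = h ∧ h' = φ a') :
    IsSideRestriction φ u₀ (collapse (φ a') (φ b') * t) h' (collapse a' b' * t₁) where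
  apply_eq a ha := by
    change φ (collapse a' b' (t₁ a)) = collapse (φ a') (φ b') (t (φ a))
    rw [apply_collapse_of_injective φ.injective, hr.apply_eq a ha]
  exists_eq_hole a ha hcol := by
    change collapse a' b' (t₁ a) = u₀ at hcol
    rcases hnew with ⟨ha', rfl⟩ | ⟨-, rfl⟩
    · have hne : t₁ a ≠ a' := fun h₁ => hhole a ha (by rw [← hr.apply_eq a ha, h₁, ha'])
      rw [collapse_apply_of_ne hne] at hcol
      exact hr.exists_eq_hole a ha hcol
    · refine ⟨a', ?_, rfl⟩
      by_cases h₁ : t₁ a = a'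
      · rw [h₁, collapse_apply_self] at hcol
        exact hcol ▸ hab
      · rw [collapse_apply_of_ne h₁] at hcol
        exact hcol ▸ Ne.symm h₁

lemma IsSideRestriction.collapse_of_notMem_range (hr : IsSideRestriction φ u₀ t h t₁)
    (hatt : IsAttachedAt φ u₀) {u w : W} (hadj : G.Adj u w)
    (hrange : u ∉ range φ ∨ w ∉ range φ) (hnew : u = h ∧ h' = h ∨ w = h ∧ h' = u) :
    IsSideRestriction φ u₀ (collapse u w * t) h' t₁ where
  apply_eq a ha := by
    change φ (t₁ a) = collapse u w (t (φ a))
    rw [← hr.apply_eq a ha, collapse_apply_of_ne]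
    intro hu
    have hw : w ∉ range φ := hrange.resolve_left (not_not.mpr ⟨_, hu⟩)
    have h₀ : t₁ a = u₀ := by
      by_contra h₀
      exact hw (hatt _ h₀ w (hu ▸ hadj))
    obtain ⟨b, hb, rfl⟩ := hr.exists_eq_hole a ha h₀
    rcases hnew with ⟨hub, -⟩ | ⟨hwb, -⟩
    · exact hb (φ.injective (by rw [← hub, ← hu, h₀]))
    · exact hw ⟨b, hwb.symm⟩
  exists_eq_hole a ha h₀ := by
    obtain ⟨b, hb, rfl⟩ := hr.exists_eq_hole a ha h₀
    rcases hnew with ⟨-, rfl⟩ | ⟨hwb, -⟩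
    · exact ⟨b, hb, rfl⟩
    · subst hwb
      exact (hrange.elim (· (hatt b hb u hadj.symm)) (· ⟨b, rfl⟩)).elim

lemma IsSideRestriction.exists_collapse (hr : IsSideRestriction φ u₀ t h t₁)
    (hatt : IsAttachedAt φ u₀) (hhole : ∀ a ≠ u₀, t (φ a) ≠ h) (ht₁ : t₁ ∈ flowMonoid H.Adj)
    {u w : W} (hadj : G.Adj u w) (hnew : u = h ∧ h' = h ∨ w = h ∧ h' = u) :
    ∃ t₁' ∈ flowMonoid H.Adj, IsSideRestriction φ u₀ (collapse u w * t) h' t₁' := by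
  by_cases hrange : u ∈ range φ ∧ w ∈ range φ
  · obtain ⟨⟨a', rfl⟩, ⟨b', rfl⟩⟩ := hrange
    have hadj' : H.Adj a' b' := φ.map_adj_iff.mp hadj
    exact ⟨_, mul_mem (Submonoid.subset_closure ⟨a', b', hadj', rfl⟩) ht₁,
      hr.collapse_map hhole hadj'.ne hnew⟩
  · exact ⟨t₁, ht₁, hr.collapse_of_notMem_range hatt hadj (not_and_or.mp hrange) hnew⟩

lemma exists_isSideRestriction (hatt : IsAttachedAt φ u₀) {t : Function.End W}
    (ht : t ∈ flowMonoid G.Adj) (hinj : InjOn t {φ u₀}ᶜ) :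
    ∃ h, t '' {φ u₀}ᶜ = {h}ᶜ ∧ ∃ t₁ ∈ flowMonoid H.Adj, IsSideRestriction φ u₀ t h t₁ := by
  induction ht using Submonoid.closure_induction_left with
  | one => exact ⟨φ u₀, image_id _, 1, one_mem _, fun _ _ => rfl, fun _ ha h₀ => (ha h₀).elim⟩
  | mul_left e he t _ ih =>
    obtain ⟨u, w, hadj, rfl⟩ := he
    obtain ⟨h, himage, t₁, ht₁, hr⟩ :=
      ih fun x hx y hy hxy => hinj hx hy (congrArg (collapse u w) hxy)
    have hhole : ∀ a ≠ u₀, t (φ a) ≠ h := fun a ha hta =>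
      (himage.le ⟨φ a, φ.injective.ne ha, rfl⟩ :) hta
    obtain ⟨h', himage', hnew⟩ := exists_image_collapse_mul_eq_compl himage hadj.ne hinj
    obtain ⟨t₁', ht₁', hr'⟩ := hr.exists_collapse hatt hhole ht₁ hadj hnew
    exact ⟨h', himage', t₁', ht₁', hr'⟩

lemma exists_mem_defectGroup_of_isAttachedAt [Finite U] (hatt : IsAttachedAt φ u₀) {v : W}
    (hv : φ u₀ = v) {s : Function.End W} (hs : s ∈ flowSemigroup G.Adj)
    (hmaps : MapsTo s {v}ᶜ {v}ᶜ) (hinj : InjOn s {v}ᶜ) :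
    ∃ p ∈ defectGroup H.Adj {u₀}, ∀ a, φ (p a) = s (φ a) := by
  subst hv
  obtain ⟨h, himage, t₁, ht₁, hr⟩ :=
    exists_isSideRestriction hatt (mem_flowMonoid_iff.mpr (Or.inr hs)) hinj
  have hh : h = φ u₀ := by
    by_contra hh
    exact (himage.ge (Ne.symm hh) |> hmaps.image_subset) rfl
  have hmaps₁ : MapsTo t₁ {u₀}ᶜ {u₀}ᶜ := fun a ha h₀ => by
    obtain ⟨b, hb, hφb⟩ := hr.exists_eq_hole a ha h₀
    exact hb (φ.injective (hφb.symm.trans hh))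
  have hinj₁ : InjOn t₁ {u₀}ᶜ := fun a ha b hb hab => by
    refine φ.injective (hinj (φ.injective.ne ha) (φ.injective.ne hb) ?_)
    rw [← hr.apply_eq a ha, ← hr.apply_eq b hb, hab]
  rcases mem_flowMonoid_iff.mp ht₁ with rfl | ht₁
  · exact ⟨1, one_mem _, fun a => hr.apply_eq a a.2⟩
  · obtain ⟨p, hp, hpt⟩ :=
      exists_mem_defectGroup_of_injOn (fun _ _ h => h.ne) ht₁ hmaps₁ hinj₁
    exact ⟨p, hp, fun a => by rw [hpt]; exact hr.apply_eq a a.2⟩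

end SideRestriction

section Extension

variable {U W : Type*}

noncomputable def extendAlong (φ : U → W) (f : Function.End U) : Function.End W :=
  Function.extend φ (φ ∘ f) id

variable {φ : U → W} {f g : Function.End U}

lemma extendAlong_apply (hφ : Injective φ) (a : U) : extendAlong φ f (φ a) = φ (f a) :=
  hφ.extend_apply _ _ a

lemma extendAlong_apply_of_notMem_range {x : W} (hx : x ∉ range φ) : extendAlong φ f x = x :=
  extend_apply' _ _ _ hx

lemma extendAlong_mul (hφ : Injective φ) :
    extendAlong φ (f * g) = extendAlong φ f * extendAlong φ g := by
  funext x
  change _ = extendAlong φ f (extendAlong φ g x)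
  by_cases hx : x ∈ range φ
  · obtain ⟨a, rfl⟩ := hx
    rw [extendAlong_apply hφ, extendAlong_apply hφ, extendAlong_apply hφ]
    rfl
  · rw [extendAlong_apply_of_notMem_range hx, extendAlong_apply_of_notMem_range hx,
      extendAlong_apply_of_notMem_range hx]

variable [DecidableEq U] [DecidableEq W]

lemma extendAlong_collapse (hφ : Injective φ) (a b : U) :
    extendAlong φ (collapse a b) = collapse (φ a) (φ b) := by
  funext x
  by_cases hx : x ∈ range φ
  · obtain ⟨c, rfl⟩ := hx
    rw [extendAlong_apply hφ, apply_collapse_of_injective hφ]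
  · rw [extendAlong_apply_of_notMem_range hx,
      collapse_apply_of_ne fun h => hx ⟨a, h.symm⟩]

lemma extendAlong_mem_flowSemigroup {H : SimpleGraph U} {G : SimpleGraph W} (φ : H ↪g G)
    {f : Function.End U} (hf : f ∈ flowSemigroup H.Adj) :
    extendAlong φ f ∈ flowSemigroup G.Adj := by
  induction hf using Subsemigroup.closure_induction with
  | mem f hf =>
    obtain ⟨a, b, hab, rfl⟩ := hf
    rw [extendAlong_collapse φ.injective]
    exact collapse_mem_flowSemigroup (φ.map_adj_iff.mpr hab)
  | mul f g _ _ hf hg =>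
    rw [extendAlong_mul φ.injective]
    exact mul_mem hf hg

lemma defectGroup_le_comap {H : SimpleGraph U} {G : SimpleGraph W} (φ : H ↪g G) {u₀ : U}
    {v : W} (hv : φ u₀ = v)
    (Φ : Equiv.Perm {a // a ∉ ({u₀} : Set U)} →* Equiv.Perm {x // x ∉ ({v} : Set W)})
    (hΦ : ∀ q (a : {a // a ∉ ({u₀} : Set U)}) (x : {x // x ∉ ({v} : Set W)}),
      (x : W) = φ a → (Φ q x : W) = φ (q a))
    (hΦ' : ∀ q (x : {x // x ∉ ({v} : Set W)}), (x : W) ∉ range φ → Φ q x = x) :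
    defectGroup H.Adj {u₀} ≤ (defectGroup G.Adj {v}).comap Φ := by
  subst hv
  refine (Subgroup.closure_le _).mpr ?_
  rintro q ⟨s, hs, hsK, hsq⟩
  refine Subgroup.subset_closure ⟨extendAlong φ s, extendAlong_mem_flowSemigroup φ hs, ?_, ?_⟩
  · rintro x rfl
    rw [extendAlong_apply φ.injective]
    exact φ.injective.ne (hsK u₀ rfl)
  · intro x hx
    by_cases hxr : x ∈ range φ
    · obtain ⟨a, rfl⟩ := hxr
      have ha : a ∉ ({u₀} : Set U) := fun h => hx (congrArg φ h)
      rw [extendAlong_apply φ.injective, hsq a ha, hΦ q ⟨a, ha⟩ ⟨φ a, hx⟩ rfl]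
    · rw [extendAlong_apply_of_notMem_range hxr, hΦ' q ⟨x, hx⟩ hxr]

end Extension

lemma Subgroup.exists_mulEquiv_of_map_eq {G N : Type*} [Group G] [Group N] {f : G →* N}
    (hf : Injective f) {K : Subgroup G} {L : Subgroup N} (h : K.map f = L) :
    ∃ ψ : L ≃* K, ∀ g, f (ψ g) = g := by
  subst h
  refine ⟨(K.equivMapOfInjective f hf).symm, fun g => ?_⟩
  rw [← K.coe_equivMapOfInjective_apply f hf, MulEquiv.apply_symm_apply]

section Wedge

variable {U₁ U₂ W : Type*} {H₁ : SimpleGraph U₁} {H₂ : SimpleGraph U₂} {G : SimpleGraph W}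

structure IsWedge (φ₁ : H₁ ↪g G) (φ₂ : H₂ ↪g G) (u₁ : U₁) (u₂ : U₂) (v : W) : Prop where
  apply_left : φ₁ u₁ = v
  apply_right : φ₂ u₂ = v
  mem_range_or : ∀ x, x ∈ range φ₁ ∨ x ∈ range φ₂
  eq_of_apply_eq : ∀ a b, φ₁ a = φ₂ b → a = u₁
  attached_left : IsAttachedAt φ₁ u₁
  attached_right : IsAttachedAt φ₂ u₂

namespace IsWedge

variable {φ₁ : H₁ ↪g G} {φ₂ : H₂ ↪g G} {u₁ : U₁} {u₂ : U₂} {v : W}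
  (hW : IsWedge φ₁ φ₂ u₁ u₂ v)

def inclusion :
    {a // a ∉ ({u₁} : Set U₁)} ⊕ {b // b ∉ ({u₂} : Set U₂)} → {x // x ∉ ({v} : Set W)} :=
  Sum.elim (fun a => ⟨φ₁ a, hW.apply_left ▸ φ₁.injective.ne a.2⟩)
    (fun b => ⟨φ₂ b, hW.apply_right ▸ φ₂.injective.ne b.2⟩)

lemma inclusion_bijective : Bijective hW.inclusion := by
  refine ⟨?_, fun x => ?_⟩
  · rintro (a | b) (a' | b') h <;> simp only [inclusion, Sum.elim_inl, Sum.elim_inr,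
      Subtype.mk.injEq] at h
    · exact congrArg _ (Subtype.ext (φ₁.injective h))
    · exact (a.2 (hW.eq_of_apply_eq a b' h)).elim
    · exact (a'.2 (hW.eq_of_apply_eq a' b h.symm)).elim
    · exact congrArg _ (Subtype.ext (φ₂.injective h))
  · rcases hW.mem_range_or x with ⟨a, ha⟩ | ⟨b, hb⟩
    · refine ⟨.inl ⟨a, fun h => x.2 ?_⟩, Subtype.ext ha⟩
      rw [← ha, ← hW.apply_left, show a = u₁ from h]
      exact mem_singleton _
    · refine ⟨.inr ⟨b, fun h => x.2 ?_⟩, Subtype.ext hb⟩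
      rw [← hb, ← hW.apply_right, show b = u₂ from h]
      exact mem_singleton _

noncomputable def equiv :
    {a // a ∉ ({u₁} : Set U₁)} ⊕ {b // b ∉ ({u₂} : Set U₂)} ≃ {x // x ∉ ({v} : Set W)} :=
  Equiv.ofBijective _ hW.inclusion_bijective

lemma equiv_symm_eq_inl_iff {x : {x // x ∉ ({v} : Set W)}} {a : {a // a ∉ ({u₁} : Set U₁)}} :
    hW.equiv.symm x = .inl a ↔ (x : W) = φ₁ a := by
  rw [Equiv.symm_apply_eq, Subtype.ext_iff]
  rfl

lemma equiv_symm_eq_inr_iff {x : {x // x ∉ ({v} : Set W)}} {b : {b // b ∉ ({u₂} : Set U₂)}} :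
    hW.equiv.symm x = .inr b ↔ (x : W) = φ₂ b := by
  rw [Equiv.symm_apply_eq, Subtype.ext_iff]
  rfl

lemma coe_eq_sumElim_equiv_symm (x : {x // x ∉ ({v} : Set W)}) :
    (x : W) = Sum.elim (fun a => φ₁ a.1) (fun b => φ₂ b.1) (hW.equiv.symm x) := by
  conv_lhs => rw [← hW.equiv.apply_symm_apply x]
  cases hW.equiv.symm x <;> rfl

noncomputable def permHom :
    Equiv.Perm {a // a ∉ ({u₁} : Set U₁)} × Equiv.Perm {b // b ∉ ({u₂} : Set U₂)} →*
      Equiv.Perm {x // x ∉ ({v} : Set W)} :=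
  hW.equiv.permCongrHom.toMonoidHom.comp (Equiv.Perm.sumCongrHom _ _)

lemma permHom_injective : Injective hW.permHom :=
  hW.equiv.permCongrHom.injective.comp Equiv.Perm.sumCongrHom_injective

lemma permHom_apply (p) (x : {x // x ∉ ({v} : Set W)}) :
    hW.permHom p x = hW.equiv (Sum.map p.1 p.2 (hW.equiv.symm x)) :=
  rfl

lemma coe_permHom_apply (p) (x : {x // x ∉ ({v} : Set W)}) :
    (hW.permHom p x : W) =
      Sum.elim (fun a => φ₁ (p.1 a)) (fun b => φ₂ (p.2 b)) (hW.equiv.symm x) := by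
  rw [permHom_apply]
  cases hW.equiv.symm x <;> rfl

lemma defectGroup_le_comap_left [DecidableEq U₁] [DecidableEq W] :
    defectGroup H₁.Adj {u₁} ≤
      (defectGroup G.Adj {v}).comap (hW.permHom.comp (MonoidHom.inl _ _)) := by
  refine defectGroup_le_comap φ₁ hW.apply_left _ (fun q a x hx => ?_) (fun q x hx => ?_)
  · rw [MonoidHom.comp_apply, coe_permHom_apply, hW.equiv_symm_eq_inl_iff.mpr hx]
    rfl
  · refine Subtype.ext ?_
    rw [MonoidHom.comp_apply, coe_permHom_apply]
    rcases h : hW.equiv.symm x with a | b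
    · exact (hx ⟨a, (hW.equiv_symm_eq_inl_iff.mp h).symm⟩).elim
    · exact (hW.equiv_symm_eq_inr_iff.mp h).symm

lemma defectGroup_le_comap_right [DecidableEq U₂] [DecidableEq W] :
    defectGroup H₂.Adj {u₂} ≤
      (defectGroup G.Adj {v}).comap (hW.permHom.comp (MonoidHom.inr _ _)) := by
  refine defectGroup_le_comap φ₂ hW.apply_right _ (fun q b x hx => ?_) (fun q x hx => ?_)
  · rw [MonoidHom.comp_apply, coe_permHom_apply, hW.equiv_symm_eq_inr_iff.mpr hx]
    rfl
  · refine Subtype.ext ?_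
    rw [MonoidHom.comp_apply, coe_permHom_apply]
    rcases h : hW.equiv.symm x with a | b
    · exact (hW.equiv_symm_eq_inl_iff.mp h).symm
    · exact (hx ⟨b, (hW.equiv_symm_eq_inr_iff.mp h).symm⟩).elim

variable [DecidableEq U₁] [DecidableEq U₂] [DecidableEq W]

lemma defectGroup_le_map [Finite U₁] [Finite U₂] :
    defectGroup G.Adj {v} ≤
      ((defectGroup H₁.Adj {u₁}).prod (defectGroup H₂.Adj {u₂})).map hW.permHom := by
  refine (Subgroup.closure_le _).mpr ?_
  rintro p ⟨s, hs, -, hsp⟩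
  have hmaps : MapsTo s {v}ᶜ {v}ᶜ := fun x hx => hsp x hx ▸ (p ⟨x, hx⟩).2
  have hinj : InjOn s {v}ᶜ := fun x hx y hy hxy => by
    rw [hsp x hx, hsp y hy] at hxy
    exact congrArg Subtype.val (p.injective (Subtype.ext hxy))
  obtain ⟨p₁, hp₁, hp₁s⟩ :=
    exists_mem_defectGroup_of_isAttachedAt hW.attached_left hW.apply_left hs hmaps hinj
  obtain ⟨p₂, hp₂, hp₂s⟩ :=
    exists_mem_defectGroup_of_isAttachedAt hW.attached_right hW.apply_right hs hmaps hinj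
  refine ⟨(p₁, p₂), ⟨hp₁, hp₂⟩, Equiv.ext fun x => Subtype.ext ?_⟩
  rw [coe_permHom_apply, ← hsp x x.2]
  rcases h : hW.equiv.symm x with a | b
  · rw [Sum.elim_inl, hp₁s, hW.equiv_symm_eq_inl_iff.mp h]
  · rw [Sum.elim_inr, hp₂s, hW.equiv_symm_eq_inr_iff.mp h]

lemma map_permHom_defectGroup_prod [Finite U₁] [Finite U₂] :
    ((defectGroup H₁.Adj {u₁}).prod (defectGroup H₂.Adj {u₂})).map hW.permHom =
      defectGroup G.Adj {v} := by
  refine le_antisymm (Subgroup.map_le_iff_le_comap.mpr ?_) hW.defectGroup_le_map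
  rintro ⟨q₁, q₂⟩ ⟨hq₁, hq₂⟩
  rw [Subgroup.mem_comap, show (q₁, q₂) = (q₁, 1) * (1, q₂) by simp, map_mul]
  exact mul_mem (hW.defectGroup_le_comap_left hq₁) (hW.defectGroup_le_comap_right hq₂)

theorem exists_mulEquiv_defectGroup [Finite U₁] [Finite U₂] :
    ∃ ψ : defectGroup G.Adj {v} ≃* defectGroup H₁.Adj {u₁} × defectGroup H₂.Adj {u₂},
      ∀ (g : defectGroup G.Adj {v}) x, hW.equiv.symm ((g : Equiv.Perm _) x) =
        Sum.map ((ψ g).1 : Equiv.Perm _) ((ψ g).2 : Equiv.Perm _) (hW.equiv.symm x) := by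
  obtain ⟨ψ, hψ⟩ :=
    Subgroup.exists_mulEquiv_of_map_eq hW.permHom_injective hW.map_permHom_defectGroup_prod
  refine ⟨ψ.trans (Subgroup.prodEquiv _ _), fun g x => ?_⟩
  rw [← hψ g, permHom_apply, Equiv.symm_apply_apply]
  rfl

end IsWedge

end Wedge

lemma isAttachedAt_induceHomOfLE {Γ : SimpleGraph V} {S T : Set V} (hST : S ⊆ T) {v : V}
    (hv : v ∈ S) (hS : ∀ x ∈ S, x ≠ v → ∀ y ∈ T, y ∉ S → ¬ Γ.Adj x y) :
    IsAttachedAt (Γ.induceHomOfLE hST) ⟨v, hv⟩ := by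
  intro a ha y hy
  by_contra hyS
  refine hS a a.2 (fun h => ha (Subtype.ext h)) y y.2 (fun h => hyS ⟨⟨y, h⟩, rfl⟩) hy

lemma isWedge_induceHomOfLE {Γ : SimpleGraph V} {S₁ S₂ : Set V} {v : V} (hv₁ : v ∈ S₁)
    (hv₂ : v ∈ S₂) (hinter : S₁ ∩ S₂ = {v})
    (hnoedge : ∀ x ∈ S₁ \ {v}, ∀ y ∈ S₂ \ {v}, ¬ Γ.Adj x y) :
    IsWedge (Γ.induceHomOfLE subset_union_left) (Γ.induceHomOfLE subset_union_right)
      (⟨v, hv₁⟩ : S₁) (⟨v, hv₂⟩ : S₂) (⟨v, mem_union_left S₂ hv₁⟩ : ↥(S₁ ∪ S₂)) where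
  apply_left := rfl
  apply_right := rfl
  mem_range_or x := x.2.imp (fun h => ⟨⟨x, h⟩, rfl⟩) (fun h => ⟨⟨x, h⟩, rfl⟩)
  eq_of_apply_eq a b h := by
    have hab : (a : V) = b := congrArg Subtype.val h
    exact Subtype.ext (hinter.subset ⟨a.2, hab ▸ b.2⟩)
  attached_left := isAttachedAt_induceHomOfLE _ hv₁ fun x hx hxv y hy hyS =>
    hnoedge x ⟨hx, hxv⟩ y ⟨hy.resolve_left hyS, fun h => hyS (h ▸ hv₁)⟩
  attached_right := isAttachedAt_induceHomOfLE _ hv₂ fun x hx hxv y hy hyS hxy =>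
    hnoedge y ⟨hy.resolve_right hyS, fun h => hyS (h ▸ hv₂)⟩ x ⟨hx, hxv⟩ hxy.symm

theorem stmt4_general [Fintype V] [DecidableEq V] (Γ : SimpleGraph V) (S₁ S₂ : Set V) (v : V)
    (hv₁ : v ∈ S₁) (hv₂ : v ∈ S₂)
    (hinter : S₁ ∩ S₂ = {v})
    (hnoedge : ∀ x ∈ S₁ \ {v}, ∀ y ∈ S₂ \ {v}, ¬ Γ.Adj x y) :
    ∃ (e : {x : ↥(S₁ ∪ S₂) // x ∉ ({⟨v, Set.mem_union_left S₂ hv₁⟩} : Set ↥(S₁ ∪ S₂))} ≃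
          ({x : ↥S₁ // x ∉ ({⟨v, hv₁⟩} : Set ↥S₁)} ⊕ {x : ↥S₂ // x ∉ ({⟨v, hv₂⟩} : Set ↥S₂)}))
      (ψ : defectGroup (Γ.induce (S₁ ∪ S₂)).Adj
              ({⟨v, Set.mem_union_left S₂ hv₁⟩} : Set ↥(S₁ ∪ S₂)) ≃*
          defectGroup (Γ.induce S₁).Adj ({⟨v, hv₁⟩} : Set ↥S₁) ×
            defectGroup (Γ.induce S₂).Adj ({⟨v, hv₂⟩} : Set ↥S₂)),
      (∀ x, Sum.elim
          (fun (y : {x : ↥S₁ // x ∉ ({⟨v, hv₁⟩} : Set ↥S₁)}) => ((y : ↥S₁) : V))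
          (fun (y : {x : ↥S₂ // x ∉ ({⟨v, hv₂⟩} : Set ↥S₂)}) => ((y : ↥S₂) : V)) (e x)
          = ((x : ↥(S₁ ∪ S₂)) : V)) ∧
      ∀ (g : defectGroup (Γ.induce (S₁ ∪ S₂)).Adj
              ({⟨v, Set.mem_union_left S₂ hv₁⟩} : Set ↥(S₁ ∪ S₂)))
        (x : {x : ↥(S₁ ∪ S₂) // x ∉ ({⟨v, Set.mem_union_left S₂ hv₁⟩} : Set ↥(S₁ ∪ S₂))}),
        e ((g : Equiv.Perm _) x) =
          Sum.map (fun z => ((ψ g).1 : Equiv.Perm _) z) (fun z => ((ψ g).2 : Equiv.Perm _) z)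
            (e x) := by
  have hW := isWedge_induceHomOfLE (Γ := Γ) hv₁ hv₂ hinter hnoedge
  obtain ⟨ψ, hψ⟩ := hW.exists_mulEquiv_defectGroup
  refine ⟨hW.equiv.symm, ψ, fun x => ?_, hψ⟩
  conv_rhs => rw [hW.coe_eq_sumElim_equiv_symm x]
  cases hW.equiv.symm x <;> rfl

/-- If `Γ₁`, `Γ₂` are connected induced subgraphs of `Γ` meeting in the single vertex `v`,
with no edges of `Γ` between `Γ₁ ∖ {v}` and `Γ₂ ∖ {v}`, then the defect 1 group of
`Γ₁ ∪ Γ₂` with defect set `{v}` is the direct product of the defect 1 groups of `Γ₁` and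
`Γ₂` with defect set `{v}` (via the canonical identification of the underlying sets). -/
theorem stmt4 [Fintype V] [DecidableEq V] (Γ : SimpleGraph V) (S₁ S₂ : Set V) (v : V)
    (hv₁ : v ∈ S₁) (hv₂ : v ∈ S₂)
    (hconn₁ : (Γ.induce S₁).Connected) (hconn₂ : (Γ.induce S₂).Connected)
    (hinter : S₁ ∩ S₂ = {v})
    (hnoedge : ∀ x ∈ S₁ \ {v}, ∀ y ∈ S₂ \ {v}, ¬ Γ.Adj x y) :
    ∃ (e : {x : ↥(S₁ ∪ S₂) // x ∉ ({⟨v, Set.mem_union_left S₂ hv₁⟩} : Set ↥(S₁ ∪ S₂))} ≃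
          ({x : ↥S₁ // x ∉ ({⟨v, hv₁⟩} : Set ↥S₁)} ⊕ {x : ↥S₂ // x ∉ ({⟨v, hv₂⟩} : Set ↥S₂)}))
      (ψ : defectGroup (Γ.induce (S₁ ∪ S₂)).Adj
              ({⟨v, Set.mem_union_left S₂ hv₁⟩} : Set ↥(S₁ ∪ S₂)) ≃*
          defectGroup (Γ.induce S₁).Adj ({⟨v, hv₁⟩} : Set ↥S₁) ×
            defectGroup (Γ.induce S₂).Adj ({⟨v, hv₂⟩} : Set ↥S₂)),
      (∀ x, Sum.elim
          (fun (y : {x : ↥S₁ // x ∉ ({⟨v, hv₁⟩} : Set ↥S₁)}) => ((y : ↥S₁) : V))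
          (fun (y : {x : ↥S₂ // x ∉ ({⟨v, hv₂⟩} : Set ↥S₂)}) => ((y : ↥S₂) : V)) (e x)
          = ((x : ↥(S₁ ∪ S₂)) : V)) ∧
      ∀ (g : defectGroup (Γ.induce (S₁ ∪ S₂)).Adj
              ({⟨v, Set.mem_union_left S₂ hv₁⟩} : Set ↥(S₁ ∪ S₂)))
        (x : {x : ↥(S₁ ∪ S₂) // x ∉ ({⟨v, Set.mem_union_left S₂ hv₁⟩} : Set ↥(S₁ ∪ S₂))}),
        e ((g : Equiv.Perm _) x) =
          Sum.map (fun z => ((ψ g).1 : Equiv.Perm _) z) (fun z => ((ψ g).2 : Equiv.Perm _) z)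
            (e x) :=
  stmt4_general Γ S₁ S₂ v hv₁ hv₂ hinter hnoedge
end

section
/- Let Γ be a finite simple connected graph and let Γ' be a connected subgraph of Γ. If Γ' has at least k+1 vertices, then the defect k group of Γ contains a subgroup isomorphic, as a permutation group, to the defect k group of Γ'. Furthermore, if Γ ∖ Γ' contains at least one vertex and Γ' has at least k vertices, then the defect k group of Γ contains a subgroup isomorphic, as a permutation group, to the defect (k−1) group of Γ'. -/
variable {V : Type*}

open Classical in
noncomputable def extendEnd (S : Set V) (s : Function.End ↥S) : Function.End V :=
  fun x => if h : x ∈ S then ↑(s ⟨x, h⟩) else x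

open Classical in
lemma extendEnd_apply_mem (S : Set V) (s : Function.End ↥S) {x : V} (h : x ∈ S) :
    extendEnd S s x = ↑(s ⟨x, h⟩) := dif_pos h

open Classical in
lemma extendEnd_apply_notMem (S : Set V) (s : Function.End ↥S) {x : V} (h : x ∉ S) :
    extendEnd S s x = x := dif_neg h

lemma extendEnd_mul (S : Set V) (s t : Function.End ↥S) :
    extendEnd S (s * t) = extendEnd S s * extendEnd S t := by
  funext x
  show extendEnd S (s * t) x = extendEnd S s (extendEnd S t x)
  by_cases h : x ∈ S
  · rw [extendEnd_apply_mem S (s * t) h, extendEnd_apply_mem S t h,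
      extendEnd_apply_mem S s (t ⟨x, h⟩).2, Subtype.coe_eta]
    rfl
  · rw [extendEnd_apply_notMem S (s * t) h, extendEnd_apply_notMem S t h,
      extendEnd_apply_notMem S s h]

lemma extendEnd_mem [DecidableEq V] (Γ : SimpleGraph V) (Γ' : Γ.Subgraph)
    {s : Function.End ↥Γ'.verts} (hs : s ∈ flowSemigroup Γ'.coe.Adj) :
    extendEnd Γ'.verts s ∈ flowSemigroup Γ.Adj := by
  induction hs using Subsemigroup.closure_induction with
  | mem f hf =>
    obtain ⟨u, v, huv, rfl⟩ := hf
    have : extendEnd Γ'.verts (collapse u v) = collapse (u : V) (v : V) := by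
      funext x
      by_cases h : x ∈ Γ'.verts
      · rw [extendEnd_apply_mem _ _ h]
        show ↑(if (⟨x, h⟩ : ↥Γ'.verts) = u then v else ⟨x, h⟩) = if x = ↑u then ↑v else x
        by_cases hx : x = ↑u
        · rw [if_pos (Subtype.ext hx), if_pos hx]
        · rw [if_neg (fun hc => hx (congrArg Subtype.val hc)), if_neg hx]
      · rw [extendEnd_apply_notMem _ _ h]
        show _ = if x = ↑u then ↑v else x
        rw [if_neg (fun hc => h (by rw [hc]; exact u.2))]
    rw [this]
    exact Subsemigroup.subset_closure ⟨u, v, Γ'.adj_sub huv, rfl⟩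
  | mul f g _ _ hf hg =>
    rw [extendEnd_mul]
    exact mul_mem hf hg

lemma key [DecidableEq V] (Γ : SimpleGraph V) (Γ' : Γ.Subgraph) (K : Set V)
    (K₀ : Set ↥Γ'.verts) (hK₀ : ∀ y : ↥Γ'.verts, y ∈ K₀ ↔ (y : V) ∈ K)
    (hgen : ∀ s ∈ flowSemigroup Γ'.coe.Adj, (∀ y, s y ∉ K₀) →
      ∃ s'' ∈ flowSemigroup Γ.Adj, (∀ x ∈ K, s'' x ∉ K) ∧
        ∀ x ∉ K, s'' x = extendEnd Γ'.verts s x) :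
    ∃ f : defectGroup Γ'.coe.Adj K₀ →* defectGroup Γ.Adj K,
      Function.Injective f ∧
      (∀ (g : defectGroup Γ'.coe.Adj K₀) (x : {y : ↥Γ'.verts // y ∉ K₀})
          (hx : ((x : ↥Γ'.verts) : V) ∉ K),
        ((((f g : Equiv.Perm {x : V // x ∉ K})
            ⟨((x : ↥Γ'.verts) : V), hx⟩) : {x : V // x ∉ K}) : V)
          = ((((g : Equiv.Perm {y : ↥Γ'.verts // y ∉ K₀}) x :
                {y : ↥Γ'.verts // y ∉ K₀}) : ↥Γ'.verts) : V)) ∧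
      (∀ (g : defectGroup Γ'.coe.Adj K₀) (y : {x : V // x ∉ K}),
        ((y : {x : V // x ∉ K}) : V) ∉ Γ'.verts →
          (f g : Equiv.Perm {x : V // x ∉ K}) y = y) := by
  classical
  set ι : {y : ↥Γ'.verts // y ∉ K₀} ↪ {x : V // x ∉ K} :=
    ⟨fun y => ⟨((y : ↥Γ'.verts) : V), fun h => y.2 ((hK₀ _).2 h)⟩,
      fun a b h => by simp only [Subtype.mk.injEq] at h; exact Subtype.ext (Subtype.ext h)⟩ with hι
  have hrange : ∀ (y : {x : V // x ∉ K}), ((y : {x : V // x ∉ K}) : V) ∉ Γ'.verts →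
      y ∉ Set.range ι := by
    rintro y hy ⟨z, rfl⟩
    exact hy (z : ↥Γ'.verts).2
  set Φ := Equiv.Perm.viaEmbeddingHom ι with hΦ
  -- generators map to generators
  have hsub : ∀ p ∈ {p : Equiv.Perm {y : ↥Γ'.verts // y ∉ K₀} |
      ∃ s ∈ flowSemigroup Γ'.coe.Adj,
        (∀ x ∈ K₀, s x ∉ K₀) ∧ ∀ (x : ↥Γ'.verts) (h : x ∉ K₀), s x = ↑(p ⟨x, h⟩)},
      Φ p ∈ {p : Equiv.Perm {x : V // x ∉ K} | ∃ s ∈ flowSemigroup Γ.Adj,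
        (∀ x ∈ K, s x ∉ K) ∧ ∀ (x : V) (h : x ∉ K), s x = ↑(p ⟨x, h⟩)} := by
    rintro p ⟨s, hsflow, hsdef, hsact⟩
    have hall : ∀ y, s y ∉ K₀ := by
      intro y
      by_cases h : y ∈ K₀
      · exact hsdef y h
      · rw [hsact y h]; exact (p ⟨y, h⟩).2
    obtain ⟨s'', h1, h2, h3⟩ := hgen s hsflow hall
    refine ⟨s'', h1, h2, fun x hx => ?_⟩
    rw [h3 x hx]
    by_cases hv : x ∈ Γ'.verts
    · have hx0 : (⟨x, hv⟩ : ↥Γ'.verts) ∉ K₀ := fun h => hx ((hK₀ _).1 h)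
      have heq : (⟨x, hx⟩ : {x : V // x ∉ K}) = ι ⟨⟨x, hv⟩, hx0⟩ := rfl
      rw [heq, hΦ, Equiv.Perm.viaEmbeddingHom_apply, Equiv.Perm.viaEmbedding_apply,
        extendEnd_apply_mem _ _ hv, hsact _ hx0]
      rfl
    · rw [extendEnd_apply_notMem _ _ hv, hΦ, Equiv.Perm.viaEmbeddingHom_apply,
        Equiv.Perm.viaEmbedding_apply_of_notMem _ _ _ (hrange ⟨x, hx⟩ hv)]
  have hmap : (defectGroup Γ'.coe.Adj K₀).map Φ ≤ defectGroup Γ.Adj K := by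
    rw [defectGroup, defectGroup, MonoidHom.map_closure]
    exact (Subgroup.closure_le _).2
      (Set.image_subset_iff.2 fun p hp => Subgroup.subset_closure (hsub p hp))
  refine ⟨(Φ.comp (defectGroup Γ'.coe.Adj K₀).subtype).codRestrict (defectGroup Γ.Adj K)
      (fun g => hmap (Subgroup.mem_map_of_mem Φ g.2)), ?_, ?_, ?_⟩
  · intro a b h
    exact Subtype.ext (Equiv.Perm.viaEmbeddingHom_injective ι (Subtype.ext_iff.1 h))
  · intro g x hx
    have heq : (⟨((x : ↥Γ'.verts) : V), hx⟩ : {x : V // x ∉ K}) = ι x := rfl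
    show ((Φ (g : Equiv.Perm {y : ↥Γ'.verts // y ∉ K₀})
        ⟨((x : ↥Γ'.verts) : V), hx⟩ : {x : V // x ∉ K}) : V) = _
    rw [heq, hΦ, Equiv.Perm.viaEmbeddingHom_apply, Equiv.Perm.viaEmbedding_apply]
    rfl
  · intro g y hy
    show Φ (g : Equiv.Perm {y : ↥Γ'.verts // y ∉ K₀}) y = y
    rw [hΦ, Equiv.Perm.viaEmbeddingHom_apply,
      Equiv.Perm.viaEmbedding_apply_of_notMem _ _ _ (hrange y hy)]


/-- Lemma on subgraphs: (1) if a connected subgraph `Γ'` of `Γ` has at least `k+1`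
vertices, then the defect `k` group of `Γ` contains a subgroup isomorphic, as a
permutation group, to the defect `k` group of `Γ'` (the embedding extends permutations by
the identity outside `Γ'`); (2) if moreover `Γ ∖ Γ'` is nonempty and `Γ'` has at least `k`
vertices, the defect `k` group of `Γ` contains a copy of the defect `k-1` group of `Γ'`. -/
theorem stmt7 [Fintype V] [DecidableEq V] (Γ : SimpleGraph V) (hconn : Γ.Connected)
    (Γ' : Γ.Subgraph) (hconn' : Γ'.Connected) (k : ℕ) (hk : 1 ≤ k) :
    ((∀ K : Set V, K ⊆ Γ'.verts → K.ncard = k → k + 1 ≤ Γ'.verts.ncard →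
      ∃ f : defectGroup Γ'.coe.Adj (Subtype.val ⁻¹' K) →* defectGroup Γ.Adj K,
        Function.Injective f ∧
        (∀ (g : defectGroup Γ'.coe.Adj (Subtype.val ⁻¹' K))
            (x : {y : ↥Γ'.verts // y ∉ Subtype.val ⁻¹' K}),
          ((((f g : Equiv.Perm {x : V // x ∉ K})
              ⟨((x : ↥Γ'.verts) : V), x.2⟩) : {x : V // x ∉ K}) : V)
            = ((((g : Equiv.Perm {y : ↥Γ'.verts // y ∉ Subtype.val ⁻¹' K}) x :
                  {y : ↥Γ'.verts // y ∉ Subtype.val ⁻¹' K}) : ↥Γ'.verts) : V)) ∧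
        (∀ (g : defectGroup Γ'.coe.Adj (Subtype.val ⁻¹' K)) (y : {x : V // x ∉ K}),
          ((y : {x : V // x ∉ K}) : V) ∉ Γ'.verts →
            (f g : Equiv.Perm {x : V // x ∉ K}) y = y))
    ∧
    (∀ K' : Set V, K' ⊆ Γ'.verts → K'.ncard = k - 1 → k ≤ Γ'.verts.ncard →
      (Γ'.vertsᶜ).Nonempty →
      ∃ K : Set V, K' ⊆ K ∧ K.ncard = k ∧ K ∩ Γ'.verts = K' ∧
        ∃ f : defectGroup Γ'.coe.Adj (Subtype.val ⁻¹' K') →* defectGroup Γ.Adj K,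
          Function.Injective f ∧
          (∀ (g : defectGroup Γ'.coe.Adj (Subtype.val ⁻¹' K'))
              (x : {y : ↥Γ'.verts // y ∉ Subtype.val ⁻¹' K'})
              (hx : ((x : ↥Γ'.verts) : V) ∉ K),
            ((((f g : Equiv.Perm {x : V // x ∉ K})
                ⟨((x : ↥Γ'.verts) : V), hx⟩) : {x : V // x ∉ K}) : V)
              = ((((g : Equiv.Perm {y : ↥Γ'.verts // y ∉ Subtype.val ⁻¹' K'}) x :
                    {y : ↥Γ'.verts // y ∉ Subtype.val ⁻¹' K'}) : ↥Γ'.verts) : V)) ∧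
          (∀ (g : defectGroup Γ'.coe.Adj (Subtype.val ⁻¹' K')) (y : {x : V // x ∉ K}),
            ((y : {x : V // x ∉ K}) : V) ∉ Γ'.verts →
              (f g : Equiv.Perm {x : V // x ∉ K}) y = y))) := by
  
  constructor
  · -- Part 1
    intro K hKsub hcard _
    have hgen : ∀ s ∈ flowSemigroup Γ'.coe.Adj, (∀ y, s y ∉ Subtype.val ⁻¹' K) →
        ∃ s'' ∈ flowSemigroup Γ.Adj, (∀ x ∈ K, s'' x ∉ K) ∧
          ∀ x ∉ K, s'' x = extendEnd Γ'.verts s x := ?_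
    · obtain ⟨f, hinj, h1, h2⟩ := key Γ Γ' K (Subtype.val ⁻¹' K) (fun y => Iff.rfl) hgen
      exact ⟨f, hinj, fun g x => h1 g x x.2, h2⟩
    intro s hs hall
    refine ⟨extendEnd Γ'.verts s, extendEnd_mem Γ Γ' hs, ?_, fun x _ => rfl⟩
    intro x hxK
    rw [extendEnd_apply_mem _ _ (hKsub hxK)]
    exact hall ⟨x, hKsub hxK⟩
  · -- Part 2
    intro K' hK'sub hcard hcard2 hne
    have hne' : Γ'.verts.Nonempty := Set.nonempty_of_ncard_ne_zero (by omega)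
    obtain ⟨a, ha⟩ := hne'
    obtain ⟨b, hb⟩ := hne
    obtain ⟨d, _, hdfst, hdsnd⟩ :=
      ((hconn a b).some).exists_boundary_dart Γ'.verts ha hb
    set v₀ := d.fst
    set w := d.snd
    have hadj : Γ.Adj w v₀ := d.adj.symm
    have hwK' : w ∉ K' := fun h => hdsnd (hK'sub h)
    refine ⟨insert w K', Set.subset_insert _ _, ?_, ?_, ?_⟩
    · rw [Set.ncard_insert_of_notMem hwK' (Set.toFinite _), hcard]
      omega
    · ext x
      simp only [Set.mem_inter_iff, Set.mem_insert_iff]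
      constructor
      · rintro ⟨(rfl | h), hv⟩
        · exact absurd hv hdsnd
        · exact h
      · intro h
        exact ⟨Or.inr h, hK'sub h⟩
    · refine key Γ Γ' (insert w K') (Subtype.val ⁻¹' K') ?_ ?_
      · intro y
        constructor
        · intro h
          exact Or.inr h
        · rintro (h | h)
          · exact absurd (h ▸ y.2) hdsnd
          · exact h
      · intro s hs hall
        have hcw : ∀ x : V, collapse w v₀ x = if x = w then v₀ else x := fun _ => rfl
        have hmoved : ∀ (z : V) (hz : z ∈ Γ'.verts),
            extendEnd Γ'.verts s z ∉ insert w K' := by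
          intro z hz
          rw [extendEnd_apply_mem _ _ hz]
          rintro (h | h)
          · exact hdsnd (h ▸ (s ⟨z, hz⟩).2)
          · exact hall ⟨z, hz⟩ h
        refine ⟨extendEnd Γ'.verts s * collapse w v₀,
          mul_mem (extendEnd_mem Γ Γ' hs)
            (Subsemigroup.subset_closure ⟨w, v₀, hadj, rfl⟩), ?_, ?_⟩
        · rintro x (rfl | h)
          · show extendEnd Γ'.verts s (collapse w v₀ w) ∉ _
            rw [hcw, if_pos rfl]
            exact hmoved v₀ hdfst
          · show extendEnd Γ'.verts s (collapse w v₀ x) ∉ _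
            rw [hcw, if_neg (fun hc => hdsnd (by rw [← hc]; exact hK'sub h))]
            exact hmoved x (hK'sub h)
        · intro x hx
          show extendEnd Γ'.verts s (collapse w v₀ x) = _
          rw [hcw, if_neg (fun hc => hx (Or.inl hc))]
end

section
/- Let k ≥ 2, let Γ be a finite simple connected graph, and let Γ' be a k-subgraph of Γ. Let x_1 ∈ Γ', v ∉ Γ', and let P = (x_1, x_2, …, x_l, v) be a shortest path between x_1 and v in Γ with l ≤ k−1. Assume that x_1 has at least 2 neighbors in Γ' other than x_2. Then the subgraph Γ' ∪ P is a k-subgraph of Γ. -/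
variable {V : Type*}

/-- A `k`-subgraph of `Γ`: a connected subgraph with more than `k` vertices whose defect
`k` group is the full symmetric group on its vertex set minus the defect set. -/
def IsKSubgraph [DecidableEq V] (Γ : SimpleGraph V) (k : ℕ) (H : Γ.Subgraph) : Prop :=
  H.Connected ∧ k < H.verts.ncard ∧
    ∀ K : Set ↥H.verts, K.ncard = k → defectGroup H.coe.Adj K = ⊤

/-- A maximal `k`-subgraph of `Γ`. -/
def IsMaxKSubgraph [DecidableEq V] (Γ : SimpleGraph V) (k : ℕ) (H : Γ.Subgraph) : Prop :=
  IsKSubgraph Γ k H ∧ ∀ H' : Γ.Subgraph, IsKSubgraph Γ k H' → H ≤ H' → H = H'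

/-- A nontrivial `k`-subgraph: one containing a vertex with at least 3 distinct
neighbors inside it. -/
def NontrivialKSubgraph (Γ : SimpleGraph V) (H : Γ.Subgraph) : Prop :=
  ∃ x ∈ H.verts, ∃ a b c : V,
    a ≠ b ∧ a ≠ c ∧ b ≠ c ∧ H.Adj x a ∧ H.Adj x b ∧ H.Adj x c

/-- A bridge in `Γ`: a path whose interior vertices have degree 2 in `Γ` and each of
whose edges disconnects `Γ` when removed. -/
def IsBridgePath (Γ : SimpleGraph V) {x y : V} (p : Γ.Walk x y) : Prop :=
  p.IsPath ∧ 1 ≤ p.length ∧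
    (∀ z ∈ p.support, z ≠ x → z ≠ y → (Γ.neighborSet z).ncard = 2) ∧
    ∀ e ∈ p.edges, ¬ (Γ.deleteEdges {e}).Connected

def IsCycleGraph [Fintype V] (Γ : SimpleGraph V) : Prop :=
  Γ.Connected ∧ ∀ v : V, (Γ.neighborSet v).ncard = 2

/-- A 2-edge connected subgraph of `Γ`. -/
def Subgraph2EC (Γ : SimpleGraph V) (H : Γ.Subgraph) : Prop :=
  H.Connected ∧ ∀ a b : V, H.Adj a b → (H.deleteEdges {s(a, b)}).Connected

/-- A 2-edge connected graph. -/
def TwoEdgeConnected (Γ : SimpleGraph V) : Prop :=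
  Γ.Connected ∧ ∀ a b : V, Γ.Adj a b → (Γ.deleteEdges {s(a, b)}).Connected

/-!
Add the path to `Γ'` one edge at a time. An edge between two vertices already present only adds
generators. For a new pendant vertex `w` attached at the end `u` of the part `x₁ ⇝ u` of the path
added so far, every permutation fixing `w` comes from the smaller `k`-subgraph. Taking the defect
set to contain `x₁ ⇝ u` and one neighbour `a` of `x₁` (at most `k` vertices, as the path is
short), collapsing along three walks through `x₁` exchanges `w` with the other neighbour `b`; a
point stabilizer is a maximal subgroup of the symmetric group, so the defect group is full for
this defect set. In a connected graph the flow moves any defect set onto any other of the same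
size, which makes it full for all of them. Since the path is shortest, `a` and `b` lie off it.
-/

open SimpleGraph Equiv

lemma Set.exists_superset_ncard_eq_of_notMem {X : Type*} [Finite X] {s : Set X} {b w : X} {k : ℕ}
    (hbs : b ∉ s) (hws : w ∉ s) (hs : s.ncard ≤ k) (hk : k + 2 ≤ Nat.card X) :
    ∃ K, s ⊆ K ∧ b ∉ K ∧ w ∉ K ∧ K.ncard = k := by
  have hst : s ⊆ {b, w}ᶜ := by
    rintro z hz (rfl | rfl)
    exacts [hbs hz, hws hz]
  have hkt : k ≤ ({b, w}ᶜ : Set X).ncard := by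
    rw [Set.ncard_compl]
    have := (Set.ncard_insert_le b {w}).trans_eq (congrArg (· + 1) (Set.ncard_singleton w))
    omega
  obtain ⟨K, hsK, hKt, hKk⟩ := Set.exists_subsuperset_card_eq hst hs hkt
  exact ⟨K, hsK, fun h => hKt h (Or.inl rfl), fun h => hKt h (Or.inr rfl), hKk⟩

section Flow

variable {X : Type*} [DecidableEq X] {F : X → X → Prop}

lemma collapse_apply (u v x : X) : collapse u v x = if x = u then v else x := rfl

lemma collapse_mem_flowSemigroup_s10 {u v : X} (h : F u v) : collapse u v ∈ flowSemigroup F :=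
  Subsemigroup.subset_closure ⟨u, v, h, rfl⟩

def Realizes (F : X → X → Prop) (K : Set X) (σ : Perm {x // x ∉ K}) : Prop :=
  ∃ s ∈ flowSemigroup F, (∀ x ∈ K, s x ∉ K) ∧ ∀ (x : X) (h : x ∉ K), s x = σ ⟨x, h⟩

variable {K : Set X}

lemma Realizes.mul {σ τ : Perm {x // x ∉ K}} (hσ : Realizes F K σ) (hτ : Realizes F K τ) :
    Realizes F K (σ * τ) := by
  obtain ⟨s, hs, hsK, hsσ⟩ := hσ
  obtain ⟨t, ht, htK, htτ⟩ := hτ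
  refine ⟨s * t, mul_mem hs ht, fun x hx => ?_, fun x hx => ?_⟩
  · change s (t x) ∉ K
    rw [hsσ _ (htK x hx)]
    exact (σ _).2
  · change s (t x) = _
    rw [htτ x hx, hsσ _ (τ _).2]
    rfl

lemma defectGroup_eq_top_of_forall_realizes (h : ∀ σ, Realizes F K σ) :
    defectGroup F K = ⊤ :=
  eq_top_iff.mpr fun σ _ => Subgroup.subset_closure (h σ)

/-- Realized permutations are closed under products, and in a finite group a nonempty set closed
under products is already a subgroup. -/
lemma Realizes.of_defectGroup_eq_top [Finite X] {σ₀ : Perm {x // x ∉ K}}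
    (h₀ : Realizes F K σ₀) (htop : defectGroup F K = ⊤) (σ : Perm {x // x ∉ K}) :
    Realizes F K σ := by
  have hmul : ∀ τ ∈ Submonoid.closure {σ | Realizes F K σ}, ∀ ρ, Realizes F K ρ →
      Realizes F K (τ * ρ) := by
    intro τ hτ
    induction hτ using Submonoid.closure_induction with
    | mem τ hτ => exact fun ρ hρ => Realizes.mul hτ hρ
    | one => simp
    | mul τ₁ τ₂ _ _ h₁ h₂ => exact fun ρ hρ => by simpa [mul_assoc] using h₁ _ (h₂ ρ hρ)
  have hmem : σ * σ₀⁻¹ ∈ Submonoid.closure {σ | Realizes F K σ} := by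
    rw [← Subgroup.closure_toSubmonoid_of_finite]
    exact (htop ▸ Subgroup.mem_top _ : σ * σ₀⁻¹ ∈ defectGroup F K)
  simpa using hmul _ hmem σ₀ h₀

lemma Realizes.of_bijOn {K' : Set X} {f g : Function.End X} (hf : f ∈ flowSemigroup F)
    (hg : g ∈ flowSemigroup F) (hfK : Set.BijOn f Kᶜ K'ᶜ) (hgK : Set.BijOn g K'ᶜ Kᶜ)
    (h : ∀ σ, Realizes F K' σ) (σ : Perm {x // x ∉ K}) : Realizes F K σ := by
  let eF : {x // x ∉ K} ≃ {x // x ∉ K'} := hfK.equiv f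
  let eG : {x // x ∉ K'} ≃ {x // x ∉ K} := hgK.equiv g
  obtain ⟨s, hs, hsK, hsσ⟩ := h ((eF.symm.trans σ).trans eG.symm)
  have hsK' : ∀ x, s x ∉ K' := fun x => by
    by_cases hx : x ∈ K'
    · exact hsK x hx
    · rw [hsσ x hx]
      exact (((eF.symm.trans σ).trans eG.symm) ⟨x, hx⟩).2
  refine ⟨g * s * f, mul_mem (mul_mem hg hs) hf, fun x _ => hgK.mapsTo (hsK' (f x)),
    fun x hx => ?_⟩
  change g (s (eF ⟨x, hx⟩)) = _
  rw [hsσ _ (eF ⟨x, hx⟩).2]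
  change (eG (eG.symm (σ (eF.symm (eF ⟨x, hx⟩)))) : X) = _
  simp

/-- The stabilizer of a point is a maximal subgroup of the symmetric group. -/
lemma forall_realizes_of_stabilizer_of_swap [Finite X] {w b : {x // x ∉ K}} (hwb : w ≠ b)
    (hstab : ∀ ρ : Perm {x // x ∉ K}, ρ w = w → Realizes F K ρ)
    (hswap : Realizes F K (swap w b)) (σ : Perm {x // x ∉ K}) : Realizes F K σ := by
  have : Nontrivial {x // x ∉ K} := ⟨⟨w, b, hwb⟩⟩
  have hle : MulAction.stabilizer (Perm {x // x ∉ K}) w ≤ defectGroup F K :=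
    fun ρ hρ => Subgroup.subset_closure (hstab ρ hρ)
  have hswap_notMem : swap w b ∉ MulAction.stabilizer (Perm {x // x ∉ K}) w := by
    rw [MulAction.mem_stabilizer_iff, Perm.smul_def, swap_apply_left]
    exact hwb.symm
  have hlt : MulAction.stabilizer (Perm {x // x ∉ K}) w < defectGroup F K :=
    lt_of_le_of_ne hle fun h => hswap_notMem (h ▸ Subgroup.subset_closure hswap)
  exact hswap.of_defectGroup_eq_top
    ((MulAction.IsPreprimitive.isCoatom_stabilizer_of_isPreprimitive _ w).lt_iff.mp hlt) σ

end Flow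

section Transfer

variable {X Y : Type*} [DecidableEq X] [DecidableEq Y] {E : Y → Y → Prop} {F : X → X → Prop}
  {φ : Y → X}

lemma exists_mem_flowSemigroup_semiconj (hφ : Function.Injective φ)
    (hadj : ∀ a b, E a b → F (φ a) (φ b))
    {s : Function.End Y} (hs : s ∈ flowSemigroup E) :
    ∃ S ∈ flowSemigroup F, (∀ y, S (φ y) = φ (s y)) ∧ ∀ x ∉ Set.range φ, S x = x := by
  induction hs using Subsemigroup.closure_induction with
  | mem f hf =>
    obtain ⟨u, v, huv, rfl⟩ := hf
    refine ⟨collapse (φ u) (φ v), collapse_mem_flowSemigroup_s10 (hadj u v huv), fun y => ?_,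
      fun x hx => if_neg fun hxu => hx ⟨u, hxu.symm⟩⟩
    simp only [collapse_apply, hφ.eq_iff]
    split_ifs <;> rfl
  | mul f g _ _ ihf ihg =>
    obtain ⟨Sf, hSf, hSf₁, hSf₂⟩ := ihf
    obtain ⟨Sg, hSg, hSg₁, hSg₂⟩ := ihg
    refine ⟨Sf * Sg, mul_mem hSf hSg, fun y => ?_, fun x hx => ?_⟩
    · change Sf (Sg (φ y)) = φ (f (g y))
      rw [hSg₁, hSf₁]
    · change Sf (Sg x) = x
      rw [hSg₂ x hx, hSf₂ x hx]

noncomputable def preimageComplEquiv (hφ : Function.Injective φ) (K : Set X) :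
    {y // y ∉ φ ⁻¹' K} ≃ {x : {x // x ∉ K} // x.1 ∈ Set.range φ} :=
  Equiv.ofBijective (fun y => ⟨⟨φ y, y.2⟩, y, rfl⟩)
    ⟨fun _ _ h => Subtype.ext (hφ (congrArg (·.1.1) h)),
      fun ⟨⟨_, hx⟩, y, hy⟩ => ⟨⟨y, show φ y ∉ K from hy ▸ hx⟩, Subtype.ext (Subtype.ext hy)⟩⟩

lemma Realizes.of_semiconj (hφ : Function.Injective φ) (hadj : ∀ a b, E a b → F (φ a) (φ b))
    {K : Set X} (hK : K ⊆ Set.range φ) {σ : Perm {y // y ∉ φ ⁻¹' K}}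
    (hσ : Realizes E (φ ⁻¹' K) σ) {ρ : Perm {x // x ∉ K}}
    (hρσ : ∀ y (hy : y ∉ φ ⁻¹' K), (ρ ⟨φ y, hy⟩ : X) = φ (σ ⟨y, hy⟩))
    (hρ : ∀ x : {x // x ∉ K}, x.1 ∉ Set.range φ → ρ x = x) : Realizes F K ρ := by
  obtain ⟨s, hs, hsK, hsσ⟩ := hσ
  obtain ⟨S, hS, hSφ, hSout⟩ := exists_mem_flowSemigroup_semiconj hφ hadj hs
  refine ⟨S, hS, ?_, fun x hx => ?_⟩
  · intro x hx
    obtain ⟨y, rfl⟩ := hK hx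
    rw [hSφ]
    exact hsK y hx
  · by_cases hxφ : x ∈ Set.range φ
    · obtain ⟨y, rfl⟩ := hxφ
      rw [hSφ, hsσ y hx, hρσ]
    · rw [hSout x hxφ, hρ ⟨x, hx⟩ hxφ]

lemma realizes_of_forall_realizes_preimage (hφ : Function.Injective φ)
    (hadj : ∀ a b, E a b → F (φ a) (φ b)) {K : Set X} (hK : K ⊆ Set.range φ)
    (h : ∀ σ, Realizes E (φ ⁻¹' K) σ) (ρ : Perm {x // x ∉ K})
    (hρ : ∀ x : {x // x ∉ K}, x.1 ∉ Set.range φ → ρ x = x) : Realizes F K ρ := by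
  have hρφ : ∀ x : {x // x ∉ K}, (ρ x).1 ∈ Set.range φ ↔ x.1 ∈ Set.range φ := by
    refine fun x => ⟨fun hρx => ?_, fun hx => ?_⟩
    · by_contra hx
      rw [hρ x hx] at hρx
      exact hx hρx
    · by_contra hρx
      rw [ρ.injective (hρ _ hρx)] at hρx
      exact hρx hx
  set e := preimageComplEquiv hφ K
  refine (h (e.symm.permCongr (ρ.subtypePerm hρφ))).of_semiconj hφ hadj hK (fun y hy => ?_) hρ
  have he : ∀ z, φ (e.symm z) = z.1.1 := fun z => by
    conv_rhs => rw [← e.apply_symm_apply z]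
    rfl
  simp [Equiv.permCongr_apply, he]
  rfl

end Transfer

section Walks

variable {X : Type*} [DecidableEq X] {G : SimpleGraph X}

def SimpleGraph.Walk.collapseSupport {a b : X} (W : G.Walk a b) : Function.End X :=
  fun x => if x ∈ W.support then b else x

lemma SimpleGraph.Walk.collapseSupport_apply {a b : X} (W : G.Walk a b) (x : X) :
    W.collapseSupport x = if x ∈ W.support then b else x := rfl

lemma SimpleGraph.Walk.collapseSupport_mem_flowSemigroup {a b : X} (W : G.Walk a b)
    (hW : ¬W.Nil) : W.collapseSupport ∈ flowSemigroup G.Adj := by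
  induction W with
  | nil => exact absurd Walk.Nil.nil hW
  | @cons a c b h W ih =>
    have hsplit : (Walk.cons h W).collapseSupport = W.collapseSupport * collapse a c := by
      funext x
      change _ = W.collapseSupport (collapse a c x)
      by_cases hx : x = a
      · simp [Walk.collapseSupport_apply, collapse_apply, hx]
      · simp [Walk.collapseSupport_apply, collapse_apply, hx]
    rw [hsplit]
    by_cases hW' : W.Nil
    · obtain rfl := hW'.eq
      have hone : W.collapseSupport = 1 := by
        funext x
        simp only [Walk.collapseSupport_apply, Walk.nil_iff_support_eq.mp hW',
          List.mem_singleton]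
        split_ifs with hx
        exacts [hx.symm, rfl]
      rw [hone, one_mul]
      exact collapse_mem_flowSemigroup_s10 h
    · exact mul_mem (ih hW') (collapse_mem_flowSemigroup_s10 h)

lemma SimpleGraph.Connected.exists_walk_subset_support (hG : G.Connected) (S : Finset X)
    (b : X) :
    ∃ a, ∃ W : G.Walk a b, ∀ x ∈ S, x ∈ W.support := by
  induction S using Finset.induction_on with
  | empty => exact ⟨b, Walk.nil, by simp⟩
  | insert x S _ ih =>
    obtain ⟨a, W, hW⟩ := ih
    obtain ⟨W₀⟩ := hG.preconnected x a
    refine ⟨x, W₀.append W, fun y hy => ?_⟩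
    rw [Walk.mem_support_append_iff]
    rcases Finset.mem_insert.mp hy with rfl | hy
    · exact Or.inl W₀.start_mem_support
    · exact Or.inr (hW y hy)

lemma SimpleGraph.Connected.exists_const_mem_flowSemigroup [Finite X] [Nontrivial X]
    (hG : G.Connected) (b : X) :
    ∃ s ∈ flowSemigroup G.Adj, ∀ x, s x = b := by
  have := Fintype.ofFinite X
  obtain ⟨a, W, hW⟩ := hG.exists_walk_subset_support Finset.univ b
  have hW' : ¬W.Nil := by
    intro hnil
    obtain ⟨x, hx⟩ := exists_ne b
    have := hW x (Finset.mem_univ x)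
    simp only [Walk.nil_iff_support_eq.mp hnil, List.mem_singleton] at this
    exact hx (this.trans hnil.eq)
  exact ⟨_, W.collapseSupport_mem_flowSemigroup hW', fun x => if_pos (hW x (Finset.mem_univ x))⟩

lemma bijOn_collapse {S : Set X} {u t : X} (hu : u ∈ S) (ht : t ∉ S) :
    Set.BijOn (collapse t u) Sᶜ (insert t (S \ {u}))ᶜ := by
  refine ⟨fun x hx => ?_, fun x hx y hy hxy => ?_, fun z hz => ?_⟩
  · simp only [Set.mem_compl_iff, Set.mem_insert_iff, Set.mem_sdiff, Set.mem_singleton_iff,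
      collapse_apply] at hx ⊢
    grind
  · simp only [Set.mem_compl_iff, collapse_apply] at hx hy hxy
    grind
  · simp only [Set.mem_compl_iff, Set.mem_insert_iff, Set.mem_sdiff, Set.mem_singleton_iff,
      not_or, not_and, not_not] at hz
    by_cases hzu : z = u
    · exact ⟨t, ht, by rw [collapse_apply, if_pos rfl, hzu]⟩
    · exact ⟨z, fun hzS => hzu (hz.2 hzS), if_neg hz.1⟩

lemma exists_mem_flowSemigroup_bijOn_insert_sdiff {s t : X} (W : G.Walk s t) {S : Set X}
    (hs : s ∈ S) (ht : t ∉ S) :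
    ∃ f ∈ flowSemigroup G.Adj, Set.BijOn f Sᶜ (insert t (S \ {s}))ᶜ := by
  induction W generalizing S with
  | nil => exact absurd hs ht
  | @cons s y t h W ih =>
    by_cases hy : y ∈ S
    · obtain ⟨f, hf, hfS⟩ := ih hy ht
      have hs' : s ∈ insert t (S \ {y}) := Or.inr ⟨hs, h.ne⟩
      have hy' : y ∉ insert t (S \ {y}) := by
        rintro (rfl | ⟨_, hyy⟩)
        exacts [ht hy, hyy rfl]
      have hset : insert y (insert t (S \ {y}) \ {s}) = insert t (S \ {s}) := by
        ext z
        simp only [Set.mem_insert_iff, Set.mem_sdiff, Set.mem_singleton_iff]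
        grind
      exact ⟨collapse y s * f, mul_mem (collapse_mem_flowSemigroup_s10 h.symm) hf,
        hset ▸ (bijOn_collapse hs' hy').comp hfS⟩
    · by_cases hyt : y = t
      · subst hyt
        exact ⟨_, collapse_mem_flowSemigroup_s10 h.symm, bijOn_collapse hs hy⟩
      · have ht' : t ∉ insert y (S \ {s}) := by
          rintro (rfl | ⟨hts, _⟩)
          exacts [hyt rfl, ht hts]
        obtain ⟨f, hf, hfS⟩ := ih (Set.mem_insert y _) ht'
        have hset : insert t (insert y (S \ {s}) \ {y}) = insert t (S \ {s}) := by
          ext z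
          simp only [Set.mem_insert_iff, Set.mem_sdiff, Set.mem_singleton_iff]
          grind
        exact ⟨f * collapse y s, mul_mem hf (collapse_mem_flowSemigroup_s10 h.symm),
          hset ▸ hfS.comp (bijOn_collapse hs hy)⟩

lemma SimpleGraph.Connected.forall_realizes_of_ncard_eq [Finite X] (hG : G.Connected)
    {K K' : Set X} (hKK' : K.ncard = K'.ncard) (h : ∀ σ, Realizes G.Adj K' σ) :
    ∀ σ, Realizes G.Adj K σ := by
  induction hn : (K \ K').ncard generalizing K with
  | zero =>
    have hsub : K ⊆ K' := Set.sdiff_eq_empty.mp ((Set.ncard_eq_zero (Set.toFinite _)).mp hn)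
    rwa [Set.eq_of_subset_of_ncard_le hsub hKK'.ge]
  | succ n ih =>
    have hn' : (K' \ K).ncard = n + 1 := by
      rw [← hn, (Set.ncard_eq_ncard_iff_ncard_sdiff_eq_ncard_sdiff (Set.toFinite K)
        (Set.toFinite K')).mp hKK']
    obtain ⟨s, hs⟩ : (K \ K').Nonempty := Set.nonempty_of_ncard_ne_zero (by omega)
    obtain ⟨t, ht⟩ : (K' \ K).Nonempty := Set.nonempty_of_ncard_ne_zero (by omega)
    obtain ⟨W⟩ := hG.preconnected s t
    obtain ⟨f, hf, hfK⟩ := exists_mem_flowSemigroup_bijOn_insert_sdiff W hs.1 ht.2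
    have hsK₁ : s ∉ insert t (K \ {s}) := by
      rintro (rfl | ⟨_, hss⟩)
      exacts [ht.2 hs.1, hss rfl]
    obtain ⟨g, hg, hgK⟩ := exists_mem_flowSemigroup_bijOn_insert_sdiff W.reverse
      (Set.mem_insert t (K \ {s})) hsK₁
    have hK : insert s (insert t (K \ {s}) \ {t}) = K := by
      ext z
      simp only [Set.mem_insert_iff, Set.mem_sdiff, Set.mem_singleton_iff]
      grind
    have hK₁ : insert t (K \ {s}) \ K' = (K \ K') \ {s} := by
      ext z
      simp only [Set.mem_insert_iff, Set.mem_sdiff, Set.mem_singleton_iff]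
      grind
    rw [hK] at hgK
    refine Realizes.of_bijOn hf hg hfK hgK (ih ?_ ?_)
    · rw [Set.ncard_exchange ht.2 hs.1, hKK']
    · rw [hK₁, Set.ncard_sdiff_singleton_of_mem hs, hn, Nat.add_sub_cancel]

lemma SimpleGraph.Connected.forall_realizes_of_defectGroup_eq_top [Finite X] (hG : G.Connected)
    {K : Set X} (hK : K.Nonempty) {b : X} (hb : b ∉ K) (htop : defectGroup G.Adj K = ⊤) :
    ∀ σ, Realizes G.Adj K σ := by
  rcases subsingleton_or_nontrivial {x // x ∉ K} with hsub | hnt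
  -- here `defectGroup G.Adj K = ⊤` holds trivially; the constant map onto `b` realizes `1`
  · obtain ⟨a, ha⟩ := hK
    have : Nontrivial X := ⟨⟨a, b, fun h => hb (h ▸ ha)⟩⟩
    obtain ⟨s, hs, hsb⟩ := hG.exists_const_mem_flowSemigroup b
    refine fun σ => ⟨s, hs, fun x _ => (hsb x).symm ▸ hb, fun x hx => ?_⟩
    rw [hsb, Subsingleton.elim (σ ⟨x, hx⟩) ⟨b, hb⟩]
  · obtain ⟨σ₀, hσ₀⟩ : ∃ σ₀, Realizes G.Adj K σ₀ := by
      by_contra! hnone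
      have hbot : defectGroup G.Adj K = ⊥ :=
        Subgroup.closure_eq_bot_iff.mpr fun σ hσ => absurd hσ (hnone σ)
      exact top_ne_bot (htop.symm.trans hbot)
    exact hσ₀.of_defectGroup_eq_top htop

end Walks

section Pendant

variable {X : Type*} [DecidableEq X] {G : SimpleGraph X}

/-- Collapsing the supports of `w → u ⇝ x → a`, then of `b → x ⇝ u → w`, then of `a → x → b`
exchanges `w` and `b` and fixes every other vertex outside `q.support ∪ {a} ⊆ K`; a realization
of `1` applied first moves the rest of `K` out of `K`. -/
lemma realizes_swap_of_walk {K : Set X} {x u w a b : X} (q : G.Walk x u) (huw : G.Adj u w)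
    (hxa : G.Adj x a) (hxb : G.Adj x b) (hab : a ≠ b) (haq : a ∉ q.support)
    (hqK : ∀ z ∈ q.support, z ∈ K) (haK : a ∈ K) (hbK : b ∉ K) (hwK : w ∉ K)
    (hid : Realizes G.Adj K 1) : Realizes G.Adj K (swap ⟨w, hwK⟩ ⟨b, hbK⟩) := by
  let W₁ : G.Walk w a := (Walk.cons huw.symm q.reverse).concat hxa
  let W₂ : G.Walk b w := (Walk.cons hxb.symm q).concat huw
  let W₃ : G.Walk a b := Walk.cons hxa.symm (Walk.cons hxb Walk.nil)
  set d := W₃.collapseSupport * W₂.collapseSupport * W₁.collapseSupport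
  have hd : d ∈ flowSemigroup G.Adj :=
    mul_mem (mul_mem (W₃.collapseSupport_mem_flowSemigroup (by simp [W₃]))
      (W₂.collapseSupport_mem_flowSemigroup (by simp [W₂])))
      (W₁.collapseSupport_mem_flowSemigroup (by simp [W₁]))
  have hdK : ∀ z (hz : z ∉ K), d z = swap (⟨w, hwK⟩ : {x // x ∉ K}) ⟨b, hbK⟩ ⟨z, hz⟩ := by
    intro z hz
    have hzq : z ∉ q.support := fun h => hz (hqK z h)
    have hbq : b ∉ q.support := fun h => hbK (hqK b h)
    have hwq : w ∉ q.support := fun h => hwK (hqK w h)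
    have hxK : x ∈ K := hqK x q.start_mem_support
    have haw : a ≠ w := fun h => hwK (h ▸ haK)
    have hza : z ≠ a := fun h => hz (h ▸ haK)
    change W₃.collapseSupport (W₂.collapseSupport (W₁.collapseSupport z)) = _
    simp only [Walk.collapseSupport_apply, W₁, W₂, W₃, Walk.support_concat, Walk.support_cons,
      Walk.support_reverse, Walk.support_nil, List.mem_append,
      List.mem_cons, List.mem_reverse, List.not_mem_nil, swap_apply_def,
      Subtype.mk.injEq]
    split_ifs <;> grind
  obtain ⟨s₀, hs₀, hs₀K, hs₀id⟩ := hid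
  refine ⟨d * s₀, mul_mem hd hs₀, fun z hz => ?_, fun z hz => ?_⟩
  · change d (s₀ z) ∉ K
    rw [hdK _ (hs₀K z hz)]
    exact (swap (⟨w, hwK⟩ : {x // x ∉ K}) ⟨b, hbK⟩ _).2
  · change d (s₀ z) = _
    rw [hs₀id z hz]
    exact hdK z hz

/-- For a `K` containing `q.support ∪ {a}` but neither `b` nor `w` the swap of `w` and `b` is
realized, which together with the stabilizer of `w` gives everything; connectivity then carries
this over to every `K` of the same size. -/
lemma forall_realizes_of_walk_of_stabilizer [Finite X] (hG : G.Connected) {k : ℕ}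
    (hk : k + 2 ≤ Nat.card X) {x u w a b : X} (q : G.Walk x u) (hqk : q.length + 2 ≤ k)
    (huw : G.Adj u w) (hxa : G.Adj x a) (hxb : G.Adj x b) (hab : a ≠ b) (haq : a ∉ q.support)
    (hbq : b ∉ q.support) (hwq : w ∉ q.support) (haw : a ≠ w) (hbw : b ≠ w)
    (hstab : ∀ K : Set X, K.ncard = k → ∀ (hwK : w ∉ K) (ρ : Perm {x // x ∉ K}),
      ρ ⟨w, hwK⟩ = ⟨w, hwK⟩ → Realizes G.Adj K ρ)
    {K : Set X} (hK : K.ncard = k) (σ : Perm {x // x ∉ K}) : Realizes G.Adj K σ := by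
  have hs : (↑(insert a q.support.toFinset) : Set X).ncard ≤ k := by
    rw [Set.ncard_coe_finset]
    have := q.support.toFinset_card_le
    have := Finset.card_insert_le a q.support.toFinset
    rw [Walk.length_support] at *
    omega
  obtain ⟨K', hK's, hbK', hwK', hK'k⟩ := Set.exists_superset_ncard_eq_of_notMem (b := b) (w := w)
    (by simpa [hab.symm] using hbq) (by simpa [haw.symm] using hwq) hs hk
  have hswap := realizes_swap_of_walk q huw hxa hxb hab haq
    (fun z hz => hK's (by simp [hz])) (hK's (by simp)) hbK' hwK' (hstab K' hK'k hwK' 1 rfl)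
  exact hG.forall_realizes_of_ncard_eq (hK.trans hK'k.symm)
    (forall_realizes_of_stabilizer_of_swap (fun h => hbw (congrArg Subtype.val h).symm)
      (hstab K' hK'k hwK') hswap) σ

end Pendant

lemma SimpleGraph.Subgraph.exists_walk_coe {W : Type*} {Γ : SimpleGraph W} {U : Γ.Subgraph}
    {x u : W} (q : Γ.Walk x u) (hq : q.toSubgraph ≤ U) :
    ∃ q' : U.coe.Walk ⟨x, hq.1 q.start_mem_verts_toSubgraph⟩ ⟨u, hq.1 q.end_mem_verts_toSubgraph⟩,
      q'.support.map Subtype.val = q.support := by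
  refine ⟨q.mapToSubgraph.map (Subgraph.inclusion hq), ?_⟩
  show List.map Subtype.val (q.mapToSubgraph.map (Subgraph.inclusion hq)).support = q.support
  rw [Walk.support_map, List.map_map]
  have h := congrArg Walk.support q.map_mapToSubgraph_hom
  rw [Walk.support_map] at h
  exact h

lemma SimpleGraph.Walk.eq_getVert_one_of_adj_of_mem_support {X : Type*} [DecidableEq X]
    {G : SimpleGraph X} {x v a : X} {p : G.Walk x v} (hp : ∀ q : G.Walk x v, p.length ≤ q.length)
    (hxa : G.Adj x a) (ha : a ∈ p.support) : a = p.getVert 1 := by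
  have hsplit := p.take_spec ha
  have hlen : (p.takeUntil a ha).length + (p.dropUntil a ha).length = p.length := by
    rw [← Walk.length_append, hsplit]
  have hshort := hp (Walk.cons hxa (p.dropUntil a ha))
  have htake : (p.takeUntil a ha).length ≠ 0 := fun h => hxa.ne (Walk.eq_of_length_eq_zero h)
  have htake₁ : (p.takeUntil a ha).length = 1 := by
    rw [Walk.length_cons] at hshort
    omega
  conv_rhs => rw [← hsplit]
  rw [Walk.getVert_append, htake₁, if_neg (lt_irrefl 1), Nat.sub_self, Walk.getVert_zero]

namespace IsKSubgraph

variable {W : Type*} [DecidableEq W] {Γ : SimpleGraph W} {k : ℕ} {H : Γ.Subgraph}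

lemma finite_verts (hH : IsKSubgraph Γ k H) : H.verts.Finite :=
  Set.finite_of_ncard_pos (Nat.zero_lt_of_lt hH.2.1)

lemma forall_realizes (hH : IsKSubgraph Γ k H) (hk : 0 < k) {K : Set H.verts}
    (hK : K.ncard = k) : ∀ σ, Realizes H.coe.Adj K σ := by
  have := hH.finite_verts.to_subtype
  obtain ⟨b, hb⟩ : ∃ b, b ∉ K := by
    by_contra! hall
    have := hH.2.1
    rw [Set.eq_univ_of_forall hall, Set.ncard_univ, Nat.card_coe_set_eq] at hK
    omega
  exact hH.1.coe.forall_realizes_of_defectGroup_eq_top (Set.nonempty_of_ncard_ne_zero (by omega))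
    hb (hH.2.2 K hK)

lemma realizes_of_le {U : Γ.Subgraph} (hH : IsKSubgraph Γ k H) (hk : 0 < k) (hHU : H ≤ U)
    {K : Set U.verts} (hK : K.ncard = k) (hKH : ∀ x ∈ K, x.1 ∈ H.verts)
    (ρ : Perm {x // x ∉ K}) (hρ : ∀ x : {x // x ∉ K}, x.1.1 ∉ H.verts → ρ x = x) :
    Realizes U.coe.Adj K ρ := by
  set φ := Subgraph.inclusion hHU
  have hrange : ∀ x : U.verts, x ∈ Set.range φ ↔ x.1 ∈ H.verts :=
    fun x => ⟨fun ⟨y, hy⟩ => hy ▸ y.2, fun hx => ⟨⟨x.1, hx⟩, rfl⟩⟩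
  have hKφ : K ⊆ Set.range φ := fun x hx => (hrange x).mpr (hKH x hx)
  refine realizes_of_forall_realizes_preimage (Subgraph.inclusion.injective hHU)
    (fun _ _ h => φ.map_adj h) hKφ (hH.forall_realizes hk ?_) ρ
    (fun x hx => hρ x fun h => hx ((hrange x).mpr h))
  rw [Set.ncard_preimage_of_injective_subset_range (Subgraph.inclusion.injective hHU) hKφ, hK]

lemma mono {H' : Γ.Subgraph} (hH : IsKSubgraph Γ k H) (hk : 0 < k) (hle : H ≤ H')
    (hverts : H.verts = H'.verts) : IsKSubgraph Γ k H' :=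
  ⟨hH.1.mono hle hverts, hverts ▸ hH.2.1, fun _ hK => defectGroup_eq_top_of_forall_realizes
    (hH.realizes_of_le hk hle hK (fun x _ => hverts.symm.subset x.2) · fun x hx =>
      absurd (hverts.symm.subset x.1.2) hx)⟩

lemma sup_subgraphOfAdj (hH : IsKSubgraph Γ k H) {x u w a b : W} (huw : Γ.Adj u w)
    (hw : w ∉ H.verts) (q : Γ.Walk x u) (hq : q.toSubgraph ≤ H) (hqk : q.length + 2 ≤ k)
    (hxa : H.Adj x a) (hxb : H.Adj x b) (hab : a ≠ b) (haq : a ∉ q.support)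
    (hbq : b ∉ q.support) : IsKSubgraph Γ k (H ⊔ Γ.subgraphOfAdj huw) := by
  set U := H ⊔ Γ.subgraphOfAdj huw
  have hHU : H ≤ U := le_sup_left
  have hqH : ∀ z ∈ q.support, z ∈ H.verts := fun z hz => hq.1 (q.mem_verts_toSubgraph.mpr hz)
  have hu : u ∈ H.verts := hqH u q.end_mem_support
  have hUverts : U.verts = insert w H.verts := by
    simp only [U, Subgraph.verts_sup, subgraphOfAdj_verts]
    grind
  have hUcard : U.verts.ncard = H.verts.ncard + 1 := by
    rw [hUverts, Set.ncard_insert_of_notMem hw hH.finite_verts]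
  have : Finite U.verts := (hUverts ▸ hH.finite_verts.insert w).to_subtype
  have hUconn : U.Connected := Subgraph.connected_sup hH.1.preconnected
    (Subgraph.subgraphOfAdj_connected huw).preconnected ⟨u, hu, by simp⟩
  have hHk := hH.2.1
  obtain ⟨q', hq'⟩ := Subgraph.exists_walk_coe q (hq.trans hHU)
  have hq'q : ∀ z ∈ q'.support, z.1 ∈ q.support := fun z hz => hq' ▸ List.mem_map_of_mem hz
  have hq'len : q'.length = q.length := by
    simpa only [List.length_map, Walk.length_support, Nat.add_right_cancel_iff]
      using congrArg List.length hq'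
  let w' : U.verts := ⟨w, hUverts ▸ Set.mem_insert w _⟩
  have hw' : ∀ z : U.verts, z.1 ∉ H.verts → z = w' := fun z hz =>
    Subtype.ext ((hUverts ▸ z.2 : z.1 ∈ insert w H.verts).resolve_right hz)
  refine ⟨hUconn, by omega, fun K hK => defectGroup_eq_top_of_forall_realizes ?_⟩
  refine forall_realizes_of_walk_of_stabilizer hUconn.coe (by rw [Nat.card_coe_set_eq]; omega)
    q' (by omega) (w := w') (a := ⟨a, hHU.1 hxa.snd_mem⟩) (b := ⟨b, hHU.1 hxb.snd_mem⟩)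
    (Subgraph.sup_adj.mpr (Or.inr (by simp [w']))) (Subgraph.sup_adj.mpr (Or.inl hxa))
    (Subgraph.sup_adj.mpr (Or.inl hxb)) (fun h => hab (Subtype.mk.inj h))
    (fun h => haq (hq'q _ h)) (fun h => hbq (hq'q _ h)) (fun h => hw (hqH _ (hq'q _ h)))
    (fun h => hw (Subtype.mk.inj h ▸ hxa.snd_mem)) (fun h => hw (Subtype.mk.inj h ▸ hxb.snd_mem))
    (fun K hK hwK ρ hρ => ?_) hK
  refine hH.realizes_of_le (by omega) hHU hK (fun z hz => ?_) ρ fun z hz => ?_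
  · by_contra h
    exact hwK (hw' z h ▸ hz)
  · obtain rfl : z = ⟨w', hwK⟩ := Subtype.ext (hw' z hz)
    exact hρ

lemma sup_toSubgraph (hH : IsKSubgraph Γ k H) {x v a b : W} (p : Γ.Walk x v)
    (hpk : p.length ≤ k - 1) (hxa : H.Adj x a) (hxb : H.Adj x b) (hab : a ≠ b)
    (hap : a ∉ p.support) (hbp : b ∉ p.support) : IsKSubgraph Γ k (H ⊔ p.toSubgraph) := by
  induction p using Walk.concatRec with
  | Hnil =>
    rwa [Walk.toSubgraph, sup_of_le_left ((singletonSubgraph_le_iff _ _).mpr hxa.fst_mem)]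
  | @Hconcat x u w q huw ih =>
    have hqsupp : ∀ z ∈ q.support, z ∈ (q.concat huw).support := fun z hz => by
      simp [Walk.support_concat, hz]
    have hqk : q.length + 1 ≤ k - 1 := (Walk.length_concat q huw).symm ▸ hpk
    have hH' := ih (by omega) hxa hxb (fun h => hap (hqsupp a h)) (fun h => hbp (hqsupp b h))
    have hsup : H ⊔ (q.concat huw).toSubgraph = (H ⊔ q.toSubgraph) ⊔ Γ.subgraphOfAdj huw := by
      rw [Walk.concat_eq_append, Walk.toSubgraph_append,
        Walk.toSubgraph_cons_nil_eq_subgraphOfAdj, sup_assoc]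
    rw [hsup]
    by_cases hw : w ∈ (H ⊔ q.toSubgraph).verts
    · have hu : u ∈ (H ⊔ q.toSubgraph).verts := Or.inr q.end_mem_verts_toSubgraph
      refine hH'.mono (by omega) le_sup_left ?_
      rw [Subgraph.verts_sup _ (Γ.subgraphOfAdj huw), subgraphOfAdj_verts,
        Set.union_eq_self_of_subset_right (Set.insert_subset hu (Set.singleton_subset_iff.mpr hw))]
    · exact hH'.sup_subgraphOfAdj huw hw q le_sup_right (by omega)
        (Subgraph.sup_adj.mpr (Or.inl hxa)) (Subgraph.sup_adj.mpr (Or.inl hxb)) hab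
        (fun h => hap (hqsupp a h)) (fun h => hbp (hqsupp b h))

end IsKSubgraph

theorem stmt10_general [DecidableEq V] (Γ : SimpleGraph V) (k : ℕ)
    (H : Γ.Subgraph) (hH : IsKSubgraph Γ k H)
    (x₁ v : V)
    (p : Γ.Walk x₁ v)
    (hshortest : ∀ q : Γ.Walk x₁ v, p.length ≤ q.length)
    (hlen : p.length ≤ k - 1)
    (hnbrs : ∃ a b : V, a ≠ b ∧ a ≠ p.getVert 1 ∧ b ≠ p.getVert 1 ∧
      H.Adj x₁ a ∧ H.Adj x₁ b) :
    IsKSubgraph Γ k (H ⊔ p.toSubgraph) := by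
  obtain ⟨a, b, hab, ha, hb, hxa, hxb⟩ := hnbrs
  exact hH.sup_toSubgraph p hlen hxa hxb hab
    (fun h => ha (p.eq_getVert_one_of_adj_of_mem_support hshortest hxa.adj_sub h))
    (fun h => hb (p.eq_getVert_one_of_adj_of_mem_support hshortest hxb.adj_sub h))

/-- Extending a `k`-subgraph along a shortest path of length at most `k-1` starting at a
vertex with two other neighbors in the subgraph yields a `k`-subgraph. -/
theorem stmt10 [Fintype V] [DecidableEq V] (Γ : SimpleGraph V) (k : ℕ) (hk : 2 ≤ k)
    (hconn : Γ.Connected) (H : Γ.Subgraph) (hH : IsKSubgraph Γ k H)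
    (x₁ v : V) (hx₁ : x₁ ∈ H.verts) (hv : v ∉ H.verts)
    (p : Γ.Walk x₁ v) (hpath : p.IsPath)
    (hshortest : ∀ q : Γ.Walk x₁ v, p.length ≤ q.length)
    (hlen : p.length ≤ k - 1)
    (hnbrs : ∃ a b : V, a ≠ b ∧ a ≠ p.getVert 1 ∧ b ≠ p.getVert 1 ∧
      H.Adj x₁ a ∧ H.Adj x₁ b) :
    IsKSubgraph Γ k (H ⊔ p.toSubgraph) :=
  stmt10_general Γ k H hH x₁ v p hshortest hlen hnbrs
end
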